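/- arXiv:2508.07154 — 5 statements merged into one kernel-verified Lean document; each statement's English description precedes it below -/
import Mathlib

section
/- Let z : ℝ → ℝ be twice differentiable and satisfy z''(λ) + (1 - G(λ)) z(λ) = k(λ) with |G(λ)| ≤ 1/10 for all λ ≥ 0, where G is differentiable and k is integrable. Define Y(λ) = (z'(λ)² + (1 - G(λ)) z(λ)²)^{1/2}. Then there is a universal constant C such that for all λ ≥ 0, Y(λ) ≤ C ( (z'(0)² + z(0)²)^{1/2} + ∫₀^λ (|k(s)| + |G'(s) z(s)|) ds ). -/
open MeasureTheory Set

/-!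
Along a solution, the energy `E = z'² + (1 - G) z²` has derivative `2 z' k - G' z²`. Since
`1 - G ≥ 9/10`, both `|z'|` and `|z| / 2` are at most `√E`, so `E' ≤ 2 √E (|k| + |G' z|)`, i.e.
`(√E)' ≤ |k| + |G' z|` wherever `E > 0`. Integrating (after replacing `E` by `E + δ²` to avoid
the singularity of `√` at `0`) bounds `√E(λ)` by `√E(0) + ∫₀^λ (|k| + |G' z|)`, and
`√E(0) ≤ 2 √(z'(0)² + z(0)²)`, so `C = 2` works.
-/

theorem sqrt_le_sqrt_add_integral_of_deriv_le {E E' g : ℝ → ℝ} {a b : ℝ} (hab : a ≤ b)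
    (hderiv : ∀ x ∈ Icc a b, HasDerivAt E (E' x) x) (hE : ∀ x ∈ Icc a b, 0 ≤ E x)
    (hg : IntervalIntegrable g volume a b) (hg0 : ∀ x ∈ Ioo a b, 0 ≤ g x)
    (hE' : ∀ x ∈ Ioo a b, E' x ≤ 2 * √(E x) * g x) :
    √(E b) ≤ √(E a) + ∫ x in a..b, g x := by
  refine le_of_forall_pos_le_add fun δ hδ => ?_
  have hpos : ∀ x ∈ Icc a b, 0 < E x + δ ^ 2 := fun x hx => by positivity [hE x hx]
  have hcont : ContinuousOn (fun x => √(E x + δ ^ 2)) (Icc a b) := fun x hx =>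
    ((hderiv x hx).continuousAt.add_const _).sqrt.continuousWithinAt
  have hstep : √(E b + δ ^ 2) - √(E a + δ ^ 2) ≤ ∫ x in a..b, g x := by
    refine intervalIntegral.sub_le_integral_of_hasDeriv_right_of_le hab hcont
      (fun x hx => (((hderiv x (Ioo_subset_Icc_self hx)).add_const _).sqrt
        (hpos x (Ioo_subset_Icc_self hx)).ne').hasDerivWithinAt)
      ((intervalIntegrable_iff_integrableOn_Icc_of_le hab).mp hg) fun x hx => ?_
    have hW : 0 < √(E x + δ ^ 2) := Real.sqrt_pos.mpr (hpos x (Ioo_subset_Icc_self hx))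
    rw [div_le_iff₀ (by positivity)]
    calc E' x ≤ 2 * √(E x) * g x := hE' x hx
      _ ≤ 2 * √(E x + δ ^ 2) * g x := by gcongr; exacts [hg0 x hx, by linarith [sq_nonneg δ]]
      _ = g x * (2 * √(E x + δ ^ 2)) := by ring
  have hb : √(E b) ≤ √(E b + δ ^ 2) := Real.sqrt_le_sqrt (by linarith [sq_nonneg δ])
  have ha : √(E a + δ ^ 2) ≤ √(E a) + δ := by
    have hEa := hE a (left_mem_Icc.mpr hab)
    rw [Real.sqrt_le_iff]
    refine ⟨by positivity, ?_⟩
    nlinarith [Real.sq_sqrt hEa, Real.sqrt_nonneg (E a)]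
  linarith

/-- `Y(λ)²` in the notation of the statement. -/
def energy (z z' G : ℝ → ℝ) (s : ℝ) : ℝ := z' s ^ 2 + (1 - G s) * z s ^ 2

theorem hasDerivAt_energy {z z' z'' G G' : ℝ → ℝ} {s : ℝ} (hz : HasDerivAt z (z' s) s)
    (hz' : HasDerivAt z' (z'' s) s) (hG : HasDerivAt G (G' s) s) :
    HasDerivAt (energy z z' G)
      (2 * z' s * (z'' s + (1 - G s) * z s) - G' s * z s ^ 2) s := by
  refine ((hz'.fun_pow 2).fun_add
    (((hasDerivAt_const s 1).fun_sub hG).fun_mul (hz.fun_pow 2))).congr_deriv ?_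
  push_cast
  ring

theorem energy_nonneg {z z' G : ℝ → ℝ} {s : ℝ} (hG : G s ≤ 1) : 0 ≤ energy z z' G s := by
  unfold energy
  have : 0 ≤ 1 - G s := by linarith
  positivity

theorem two_mul_mul_sub_mul_sq_le {p q c k m : ℝ} (hc : 1 / 4 ≤ c) :
    2 * p * k - m * q ^ 2 ≤ 2 * √(p ^ 2 + c * q ^ 2) * (|k| + |m * q|) := by
  set S := √(p ^ 2 + c * q ^ 2)
  have hp : |p| ≤ S := Real.abs_le_sqrt (by nlinarith [sq_nonneg q])
  have hq : |q| / 2 ≤ S := by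
    rw [Real.le_sqrt (by positivity) (by nlinarith [sq_nonneg p, sq_nonneg q])]
    nlinarith [sq_abs q, sq_nonneg p, sq_nonneg q]
  have hpk : p * k ≤ |p| * |k| := abs_mul p k ▸ le_abs_self _
  have hmq : -(m * q * q) ≤ |m * q| * |q| := abs_mul (m * q) q ▸ neg_le_abs _
  calc 2 * p * k - m * q ^ 2 ≤ 2 * (|p| * |k|) + |m * q| * |q| := by nlinarith
    _ ≤ 2 * (S * |k|) + |m * q| * (2 * S) := by gcongr; linarith
    _ = 2 * S * (|k| + |m * q|) := by ring

theorem sqrt_add_mul_sq_le_two_mul_sqrt {p q c : ℝ} (hc : c ≤ 4) :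
    √(p ^ 2 + c * q ^ 2) ≤ 2 * √(p ^ 2 + q ^ 2) := by
  rw [show (2 : ℝ) = √(2 ^ 2) by simp, ← Real.sqrt_mul (by positivity)]
  exact Real.sqrt_le_sqrt (by nlinarith [sq_nonneg p, sq_nonneg q])

/-- Energy estimate for the perturbed oscillator `z'' + (1 - G) z = k` with `|G| ≤ 1/10`:
`Y(λ) = sqrt(z'(λ)² + (1-G(λ)) z(λ)²)` is controlled by the initial energy plus
`∫₀^λ (|k| + |G' z|)`, with a universal constant. -/
theorem stmt0 :
    ∃ C : ℝ, 0 < C ∧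
      ∀ (z z' z'' G G' k : ℝ → ℝ),
        (∀ l : ℝ, HasDerivAt z (z' l) l) →
        (∀ l : ℝ, HasDerivAt z' (z'' l) l) →
        (∀ l : ℝ, HasDerivAt G (G' l) l) →
        (∀ l : ℝ, 0 ≤ l → |G l| ≤ 1 / 10) →
        (∀ l : ℝ, 0 ≤ l → z'' l + (1 - G l) * z l = k l) →
        (∀ l : ℝ, 0 ≤ l → IntervalIntegrable k volume 0 l) →
        (∀ l : ℝ, 0 ≤ l → IntervalIntegrable (fun s => G' s * z s) volume 0 l) →
        ∀ l : ℝ, 0 ≤ l →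
          Real.sqrt ((z' l) ^ 2 + (1 - G l) * (z l) ^ 2) ≤
            C * (Real.sqrt ((z' 0) ^ 2 + (z 0) ^ 2)
              + ∫ s in (0:ℝ)..l, (|k s| + |G' s * z s|)) := by
  refine ⟨2, two_pos, ?_⟩
  intro z z' z'' G G' k hz hz' hG hGb hode hk hGz l hl
  have hGbounds : ∀ s, 0 ≤ s → -(1 / 10) ≤ G s ∧ G s ≤ 1 / 10 := fun s hs =>
    abs_le.mp (hGb s hs)
  have hmain :
      √(energy z z' G l) ≤ √(energy z z' G 0) + ∫ s in (0:ℝ)..l, (|k s| + |G' s * z s|) :=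
    sqrt_le_sqrt_add_integral_of_deriv_le hl
      (fun s _ => hasDerivAt_energy (hz s) (hz' s) (hG s))
      (fun s hs => energy_nonneg (by linarith [(hGbounds s hs.1).2]))
      ((hk l hl).abs.add (hGz l hl).abs) (fun _ _ => by positivity)
      fun s hs => by
        rw [hode s hs.1.le]
        exact two_mul_mul_sub_mul_sq_le (by linarith [(hGbounds s hs.1.le).2])
  have hinitial : √(energy z z' G 0) ≤ 2 * √(z' 0 ^ 2 + z 0 ^ 2) :=
    sqrt_add_mul_sq_le_two_mul_sqrt (by linarith [(hGbounds 0 le_rfl).1])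
  have hint : 0 ≤ ∫ s in (0:ℝ)..l, (|k s| + |G' s * z s|) :=
    intervalIntegral.integral_nonneg hl fun _ _ => by positivity
  change √(energy z z' G l) ≤ _
  linarith
end

section
/- For all real s and positive reals a, b with a > b > 0, the improper integral ∫₀^∞ sin(a s) J₀(b s) ds converges and equals (a² - b²)^{-1/2}, where J₀ is the Bessel function of the first kind of order zero. -/
/-!
By `π`-periodicity, `J₀(x) = π⁻¹ ∫_{-π/2}^{π/2} cos (x sin θ) dθ`. Exchanging the two integrals,
the inner one is elementary:
`∫₀^T sin (a s) cos (c s) ds = ½ ∑_± (1 - cos ((a ± c) T)) / (a ± c)`, and the symmetry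
`θ ↦ -θ` merges the two terms at `c = b sin θ`. The non-oscillating part is
`∫ dθ / (a + b sin θ) = π / √(a² - b²)`, computed with the substitution `t = tan (θ / 2)`.
After the substitution `u = sin θ` the oscillating part is a Fourier integral of the integrable
function `(1 - u²)^{-1/2} / (a + b u)` on `(-1, 1)`, so it tends to zero by Riemann–Lebesgue.
-/

/-- The Bessel function of the first kind of order zero,
`J₀(x) = (1/π) ∫₀^π cos (x sin θ) dθ`. -/
noncomputable def besselJ0 (x : ℝ) : ℝ :=
  (1 / Real.pi) * ∫ θ in (0:ℝ)..Real.pi, Real.cos (x * Real.sin θ)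

open MeasureTheory Real Filter Set Topology
open scoped FourierTransform

section SineSubstitution

variable {E : Type*} [NormedAddCommGroup E] [NormedSpace ℝ E]

theorem sin_image_Ioo : sin '' Ioo (-(π / 2)) (π / 2) = Ioo (-1) 1 :=
  sinPartialHomeomorph.image_source_eq_target

theorem abs_cos_mul_inv_sqrt_one_sub_sin_sq {θ : ℝ} (hθ : θ ∈ Ioo (-(π / 2)) (π / 2)) :
    |cos θ| * (√(1 - sin θ ^ 2))⁻¹ = 1 := by
  rw [← abs_cos_eq_sqrt_one_sub_sin_sq]
  exact mul_inv_cancel₀ (abs_pos.2 (cos_pos_of_mem_Ioo hθ).ne').ne'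

theorem integral_comp_sin_eq_setIntegral (g : ℝ → E) :
    ∫ θ in -(π / 2)..π / 2, g (sin θ) = ∫ u in Ioo (-1) 1, (√(1 - u ^ 2))⁻¹ • g u := by
  rw [← sin_image_Ioo, integral_image_eq_integral_abs_deriv_smul measurableSet_Ioo
    (fun θ _ => (hasDerivAt_sin θ).hasDerivWithinAt) (injOn_sin.mono Ioo_subset_Icc_self),
    intervalIntegral.integral_of_le (by linarith [pi_pos]), integral_Ioc_eq_integral_Ioo]
  refine setIntegral_congr_fun measurableSet_Ioo fun θ hθ => ?_
  rw [smul_smul, abs_cos_mul_inv_sqrt_one_sub_sin_sq hθ, one_smul]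

theorem integrableOn_inv_sqrt_one_sub_sq :
    IntegrableOn (fun u : ℝ => (√(1 - u ^ 2))⁻¹) (Icc (-1) 1) := by
  rw [integrableOn_Icc_iff_integrableOn_Ioo, ← sin_image_Ioo,
    integrableOn_image_iff_integrableOn_abs_deriv_smul measurableSet_Ioo
      (fun θ _ => (hasDerivAt_sin θ).hasDerivWithinAt) (injOn_sin.mono Ioo_subset_Icc_self)]
  refine (integrableOn_const measure_Ioo_lt_top.ne (C := (1 : ℝ))).congr_fun
    (fun θ hθ => ?_) measurableSet_Ioo
  rw [smul_eq_mul, abs_cos_mul_inv_sqrt_one_sub_sin_sq hθ]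

theorem integral_comp_neg_sin (g : ℝ → E) :
    ∫ θ in -(π / 2)..π / 2, g (-sin θ) = ∫ θ in -(π / 2)..π / 2, g (sin θ) := by
  simpa only [sin_neg, neg_neg] using
    intervalIntegral.integral_comp_neg (a := -(π / 2)) (b := π / 2) (fun θ => g (sin θ))

end SineSubstitution

theorem besselJ0_eq_integral (x : ℝ) :
    besselJ0 x = π⁻¹ * ∫ θ in -(π / 2)..π / 2, cos (x * sin θ) := by
  have hper : Function.Periodic (fun θ => cos (x * sin θ)) π := fun θ => by
    simp only [sin_add_pi, mul_neg, cos_neg]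
  have := hper.intervalIntegral_add_eq 0 (-(π / 2))
  rw [zero_add, show -(π / 2) + π = π / 2 by ring] at this
  rw [besselJ0, one_div, this]

theorem integral_sin_mul (k T : ℝ) :
    ∫ s in (0 : ℝ)..T, sin (k * s) = (1 - cos (k * T)) / k := by
  rcases eq_or_ne k 0 with rfl | hk
  · simp
  · rw [intervalIntegral.integral_comp_mul_left (fun s => sin s) hk, integral_sin, mul_zero,
      cos_zero, smul_eq_mul, inv_mul_eq_div]

theorem integral_sin_mul_cos_mul (a c T : ℝ) :
    ∫ s in (0 : ℝ)..T, sin (a * s) * cos (c * s)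
      = ((1 - cos ((a + c) * T)) / (a + c) + (1 - cos ((a - c) * T)) / (a - c)) / 2 := by
  have hprod : ∀ s, sin (a * s) * cos (c * s) = (sin ((a + c) * s) + sin ((a - c) * s)) / 2 := by
    intro s
    rw [add_mul, sub_mul, sin_add, sin_sub]
    ring
  simp_rw [hprod]
  rw [intervalIntegral.integral_div, intervalIntegral.integral_add
    (Continuous.intervalIntegrable (by fun_prop) _ _)
    (Continuous.intervalIntegrable (by fun_prop) _ _), integral_sin_mul, integral_sin_mul]

theorem integral_sin_mul_besselJ0_eq_integral_integral (a b T : ℝ) :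
    ∫ s in (0 : ℝ)..T, sin (a * s) * besselJ0 (b * s)
      = π⁻¹ * ∫ θ in -(π / 2)..π / 2, ∫ s in (0 : ℝ)..T, sin (a * s) * cos (b * sin θ * s) := by
  have hpt : ∀ s, sin (a * s) * besselJ0 (b * s)
      = π⁻¹ * ∫ θ in -(π / 2)..π / 2, sin (a * s) * cos (b * sin θ * s) := fun s => by
    rw [besselJ0_eq_integral, mul_left_comm, ← intervalIntegral.integral_const_mul]
    simp_rw [mul_right_comm b]
  simp_rw [hpt]
  rw [intervalIntegral.integral_const_mul, intervalIntegral_intervalIntegral_swap]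
  exact (ContinuousOn.integrableOn_compact (isCompact_uIcc.prod isCompact_uIcc)
    (by fun_prop : Continuous _).continuousOn).mono_set
      (prod_mono uIoc_subset_uIcc uIoc_subset_uIcc)

theorem add_mul_pos_of_abs_le_one {a b u : ℝ} (hba : |b| < a) (hu : |u| ≤ 1) :
    0 < a + b * u := by
  have : |b * u| ≤ |b| := by
    rw [abs_mul]
    exact mul_le_of_le_one_right (abs_nonneg b) hu
  linarith [neg_abs_le (b * u)]

theorem hasDerivAt_arctan_tan_half {a b c θ : ℝ} (hc : c ≠ 0) (hc2 : c ^ 2 = a ^ 2 - b ^ 2)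
    (hcos : cos (θ / 2) ≠ 0) (hθ : a + b * sin θ ≠ 0) :
    HasDerivAt (fun θ => 2 / c * arctan ((a * tan (θ / 2) + b) / c)) (a + b * sin θ)⁻¹ θ := by
  refine (((((hasDerivAt_tan hcos).comp θ ((hasDerivAt_id' θ).div_const 2)).const_mul a
    |>.add_const b).div_const c).arctan.const_mul (2 / c)).congr_deriv ?_
  have hsin : sin θ = 2 * sin (θ / 2) * cos (θ / 2) := by
    rw [← sin_two_mul]
    ring_nf
  simp only [Function.comp_apply, tan_eq_sin_div_cos]
  rw [hsin] at hθ ⊢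
  field_simp
  rw [eq_div_iff fun h => hθ (by linarith)]
  linear_combination (-cos (θ / 2) ^ 2) * hc2 - a ^ 2 * sin_sq_add_cos_sq (θ / 2)

theorem integral_inv_add_mul_sin {a b : ℝ} (hba : |b| < a) :
    ∫ θ in -(π / 2)..π / 2, (a + b * sin θ)⁻¹ = π / √(a ^ 2 - b ^ 2) := by
  have hab_add : 0 < a + b := by linarith [neg_abs_le b]
  have hab_sub : 0 < a - b := by linarith [le_abs_self b]
  have hpos : ∀ θ, 0 < a + b * sin θ := fun θ =>
    add_mul_pos_of_abs_le_one hba (abs_sin_le_one θ)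
  set c := √(a ^ 2 - b ^ 2)
  have hc : 0 < c := sqrt_pos.2 (by nlinarith)
  have hc2 : c ^ 2 = a ^ 2 - b ^ 2 := sq_sqrt (by nlinarith)
  have hderiv : ∀ θ ∈ uIcc (-(π / 2)) (π / 2),
      HasDerivAt (fun θ => 2 / c * arctan ((a * tan (θ / 2) + b) / c)) (a + b * sin θ)⁻¹ θ := by
    intro θ hθ
    rw [uIcc_of_le (by linarith [pi_pos])] at hθ
    have hcos : 0 < cos (θ / 2) :=
      cos_pos_of_mem_Ioo ⟨by linarith [hθ.1, pi_pos], by linarith [hθ.2, pi_pos]⟩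
    exact hasDerivAt_arctan_tan_half hc.ne' hc2 hcos.ne' (hpos θ).ne'
  rw [intervalIntegral.integral_eq_sub_of_hasDerivAt hderiv
    ((Continuous.inv₀ (by fun_prop) fun θ => (hpos θ).ne').intervalIntegrable _ _)]
  -- `(a - b) / c` and `(a + b) / c` are reciprocal, so their arctangents add up to `π / 2`.
  have hinv : (a - b) / c = ((a + b) / c)⁻¹ := by
    field_simp
    nlinarith
  rw [show π / 2 / 2 = π / 4 by ring, show -(π / 2) / 2 = -(π / 4) by ring, tan_neg,
    tan_pi_div_four, mul_one, mul_neg, mul_one,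
    show (-a + b) / c = -((a + b) / c)⁻¹ by rw [← hinv]; ring, arctan_neg,
    arctan_inv_of_pos (by positivity)]
  field_simp
  ring

-- `cos ((d + c u) T) f u` is the real part of `e^{i d T}` times the Fourier integrand of `f`
-- at frequency `-c T / 2π`.
theorem tendsto_integral_cos_mul_atTop {f : ℝ → ℝ} (hf : Integrable f) {c : ℝ} (hc : c ≠ 0)
    (d : ℝ) : Tendsto (fun T => ∫ u, cos ((d + c * u) * T) * f u) atTop (𝓝 0) := by
  have hκ : -(c / (2 * π)) ≠ 0 := by simp [hc, pi_ne_zero]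
  have hRL := (Real.tendsto_integral_exp_smul_cocompact (fun u => (f u : ℂ))).comp
    ((tendsto_cocompact_mul_left₀ hκ).mono_left atTop_le_cocompact)
  refine squeeze_zero_norm (fun T => ?_) (tendsto_norm_zero.comp hRL)
  have hexp : ∀ u, Complex.exp (↑(d * T) * Complex.I) *
      (𝐞 (-(u * (-(c / (2 * π)) * T))) • (f u : ℂ))
        = Complex.exp (↑((d + c * u) * T) * Complex.I) * f u := by
    intro u
    rw [Circle.smul_def, fourierChar_apply, smul_eq_mul, ← mul_assoc, ← Complex.exp_add]
    congr 2
    push_cast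
    field_simp
  have hint : Integrable (fun u => Complex.exp (↑((d + c * u) * T) * Complex.I) * f u) :=
    hf.ofReal.bdd_mul (c := 1) (by fun_prop)
      (ae_of_all _ fun u => (Complex.norm_exp_ofReal_mul_I _).le)
  have hre : ∫ u, cos ((d + c * u) * T) * f u
      = (Complex.exp (↑(d * T) * Complex.I) *
          ∫ u, 𝐞 (-(u * (-(c / (2 * π)) * T))) • (f u : ℂ)).re := by
    rw [← integral_const_mul]
    simp_rw [hexp]
    rw [← Complex.reCLM_apply, ← ContinuousLinearMap.integral_comp_comm _ hint]
    congr 1 with u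
    rw [Complex.reCLM_apply, Complex.re_mul_ofReal, Complex.exp_ofReal_mul_I_re]
  rw [hre, Real.norm_eq_abs]
  refine (Complex.abs_re_le_norm _).trans ?_
  rw [norm_mul, Complex.norm_exp_ofReal_mul_I, one_mul]
  rfl

theorem tendsto_integral_cos_div_add_mul_sin_atTop {a b : ℝ} (hb : b ≠ 0) (hba : |b| < a) :
    Tendsto (fun T => ∫ θ in -(π / 2)..π / 2, cos ((a + b * sin θ) * T) / (a + b * sin θ))
      atTop (𝓝 0) := by
  set f : ℝ → ℝ := fun u => (√(1 - u ^ 2))⁻¹ * (a + b * u)⁻¹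
  have hf : IntegrableOn f (Icc (-1) 1) :=
    integrableOn_inv_sqrt_one_sub_sq.mul_continuousOn
      (ContinuousOn.inv₀ (by fun_prop) fun u hu =>
        (add_mul_pos_of_abs_le_one hba (abs_le.2 hu)).ne') isCompact_Icc
  have hf' : Integrable ((Ioo (-1) 1).indicator f) :=
    (hf.mono_set Ioo_subset_Icc_self).integrable_indicator measurableSet_Ioo
  refine (tendsto_integral_cos_mul_atTop hf' hb a).congr fun T => ?_
  rw [integral_comp_sin_eq_setIntegral (fun v => cos ((a + b * v) * T) / (a + b * v)),
    ← integral_indicator measurableSet_Ioo]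
  congr with u
  simp only [Set.indicator_apply, f, smul_eq_mul]
  split_ifs <;> ring

theorem integral_sin_mul_besselJ0 {a b : ℝ} (hba : |b| < a) (T : ℝ) :
    ∫ s in (0 : ℝ)..T, sin (a * s) * besselJ0 (b * s)
      = (√(a ^ 2 - b ^ 2))⁻¹
        - π⁻¹ * ∫ θ in -(π / 2)..π / 2, cos ((a + b * sin θ) * T) / (a + b * sin θ) := by
  have hpos : ∀ θ, 0 < a + b * sin θ := fun θ =>
    add_mul_pos_of_abs_le_one hba (abs_sin_le_one θ)
  have hneg : ∀ θ, 0 < a - b * sin θ := fun θ => by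
    simpa [sub_eq_add_neg] using
      add_mul_pos_of_abs_le_one (b := -b) (by rwa [abs_neg]) (abs_sin_le_one θ)
  have hsym := integral_comp_neg_sin (fun v => (1 - cos ((a + b * v) * T)) / (a + b * v))
  simp only [mul_neg, ← sub_eq_add_neg] at hsym
  calc ∫ s in (0 : ℝ)..T, sin (a * s) * besselJ0 (b * s)
      = π⁻¹ * ∫ θ in -(π / 2)..π / 2, ((1 - cos ((a + b * sin θ) * T)) / (a + b * sin θ)
          + (1 - cos ((a - b * sin θ) * T)) / (a - b * sin θ)) / 2 := by
        simp_rw [integral_sin_mul_besselJ0_eq_integral_integral, integral_sin_mul_cos_mul]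
    _ = π⁻¹ * ∫ θ in -(π / 2)..π / 2, (1 - cos ((a + b * sin θ) * T)) / (a + b * sin θ) := by
        rw [intervalIntegral.integral_div, intervalIntegral.integral_add, hsym, add_self_div_two]
        · exact (Continuous.div (by fun_prop) (by fun_prop)
            fun θ => (hpos θ).ne').intervalIntegrable _ _
        · exact (Continuous.div (by fun_prop) (by fun_prop)
            fun θ => (hneg θ).ne').intervalIntegrable _ _
    _ = π⁻¹ * ((∫ θ in -(π / 2)..π / 2, (a + b * sin θ)⁻¹)
          - ∫ θ in -(π / 2)..π / 2, cos ((a + b * sin θ) * T) / (a + b * sin θ)) := by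
        simp_rw [sub_div, one_div]
        rw [intervalIntegral.integral_sub]
        · exact (Continuous.inv₀ (by fun_prop) fun θ => (hpos θ).ne').intervalIntegrable _ _
        · exact (Continuous.div (by fun_prop) (by fun_prop)
            fun θ => (hpos θ).ne').intervalIntegrable _ _
    _ = _ := by
        rw [integral_inv_add_mul_sin hba, mul_sub, ← div_eq_inv_mul,
          div_div_cancel_left' pi_ne_zero]

/-- For `a > b > 0`, the improper integral `∫₀^∞ sin(a s) J₀(b s) ds` converges
(as a limit of `∫₀^T` as `T → ∞`) and equals `(a² - b²)^{-1/2}`. -/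
theorem stmt1 (a b : ℝ) (hb : 0 < b) (hab : b < a) :
    Filter.Tendsto (fun T : ℝ => ∫ s in (0:ℝ)..T, Real.sin (a * s) * besselJ0 (b * s))
      Filter.atTop (nhds ((Real.sqrt (a ^ 2 - b ^ 2))⁻¹)) := by
  have hba : |b| < a := by rwa [abs_of_pos hb]
  simp_rw [integral_sin_mul_besselJ0 hba]
  simpa using tendsto_const_nhds.sub
    ((tendsto_integral_cos_div_add_mul_sin_atTop hb.ne' hba).const_mul π⁻¹)
end

section
/- Let f, g : ℝ^{1+2} → ℝ be smooth. If w solves -□w = ∂_γ(f g) and w̃ := w + (1/4) ∂_γ(fg), then -□ w̃ = (1/4)(-□∂_γ f + ∂_γ f) g + (3/4) ∂_γ f (-□g + g) + (3/4)(-□f + f) ∂_γ g + (1/4) f (-□∂_γ g + ∂_γ g) - (1/2) Q_{γα}(∂^α f, g) - (1/2) Q_{αγ}(f, ∂^α g), where Q_{αβ}(u,v) = ∂_α u ∂_β v - ∂_β u ∂_α v and repeated index α is summed over 0,1,2 with the Minkowski metric diag(-1,1,1). -/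
/-- Partial derivative in `t` of a function `u(t, x₁, x₂)`. -/
noncomputable def pdt (u : ℝ → ℝ → ℝ → ℝ) : ℝ → ℝ → ℝ → ℝ :=
  fun t x y => deriv (fun s => u s x y) t

/-- Partial derivative in `x₁`. -/
noncomputable def pd1 (u : ℝ → ℝ → ℝ → ℝ) : ℝ → ℝ → ℝ → ℝ :=
  fun t x y => deriv (fun s => u t s y) x

/-- Partial derivative in `x₂`. -/
noncomputable def pd2 (u : ℝ → ℝ → ℝ → ℝ) : ℝ → ℝ → ℝ → ℝ :=
  fun t x y => deriv (fun s => u t x s) y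

/-- Lorentz boost `L₁ = x₁ ∂_t + t ∂_{x₁}`. -/
noncomputable def Lb1 (u : ℝ → ℝ → ℝ → ℝ) : ℝ → ℝ → ℝ → ℝ :=
  fun t x y => x * pdt u t x y + t * pd1 u t x y

/-- Lorentz boost `L₂ = x₂ ∂_t + t ∂_{x₂}`. -/
noncomputable def Lb2 (u : ℝ → ℝ → ℝ → ℝ) : ℝ → ℝ → ℝ → ℝ :=
  fun t x y => y * pdt u t x y + t * pd2 u t x y

/-- Rotation `Ω = x₁ ∂_{x₂} - x₂ ∂_{x₁}`. -/
noncomputable def rotOp (u : ℝ → ℝ → ℝ → ℝ) : ℝ → ℝ → ℝ → ℝ :=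
  fun t x y => x * pd2 u t x y - y * pd1 u t x y

/-- Coordinate derivative `∂_α`, `α ∈ {0,1,2}` (0 = time). -/
noncomputable def PD (α : Fin 3) : (ℝ → ℝ → ℝ → ℝ) → (ℝ → ℝ → ℝ → ℝ) :=
  if α = 0 then pdt else if α = 1 then pd1 else pd2

/-- Signs of the Minkowski metric `diag(-1,1,1)`, used to raise indices. -/
def eps (α : Fin 3) : ℝ := if α = 0 then -1 else 1

/-- `-□u = ∂_t²u - Δu` (with `□ = -∂_t² + Δ`). -/
noncomputable def negBox (u : ℝ → ℝ → ℝ → ℝ) : ℝ → ℝ → ℝ → ℝ :=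
  fun t x y => pdt (pdt u) t x y - pd1 (pd1 u) t x y - pd2 (pd2 u) t x y

/-- Null form `Q_{αβ}(u,v) = ∂_α u ∂_β v - ∂_β u ∂_α v`. -/
noncomputable def Qf (α β : Fin 3) (u v : ℝ → ℝ → ℝ → ℝ) : ℝ → ℝ → ℝ → ℝ :=
  fun t x y => PD α u t x y * PD β v t x y - PD β u t x y * PD α v t x y

/-! ### Auxiliary framework: directional derivatives on `ℝ × ℝ × ℝ` -/

abbrev V3 := ℝ × ℝ × ℝ

noncomputable def Dv (v : V3) (U : V3 → ℝ) : V3 → ℝ := fun p => fderiv ℝ U p v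

def E0 : V3 := (1, 0, 0)
def E1 : V3 := (0, 1, 0)
def E2 : V3 := (0, 0, 1)

noncomputable def EV : Fin 3 → V3 := fun i => if i = 0 then E0 else if i = 1 then E1 else E2

lemma Dv_smooth {U : V3 → ℝ} (hU : ContDiff ℝ (⊤ : ℕ∞) U) (v : V3) : ContDiff ℝ (⊤ : ℕ∞) (Dv v U) :=
  (hU.fderiv_right (by simp)).clm_apply contDiff_const

lemma Dv_diff {U : V3 → ℝ} (hU : ContDiff ℝ (⊤ : ℕ∞) U) (v : V3) : Differentiable ℝ (Dv v U) :=
  (Dv_smooth hU v).differentiable (by simp)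

lemma Dv_comm {U : V3 → ℝ} (hU : ContDiff ℝ (⊤ : ℕ∞) U) (v w : V3) :
    Dv v (Dv w U) = Dv w (Dv v U) := by
  funext p
  have hd : Differentiable ℝ U := hU.differentiable (by simp)
  have hd' : Differentiable ℝ (fderiv ℝ U) := (hU.fderiv_right (m := (⊤ : ℕ∞)) (by simp)).differentiable (by simp)
  have key : ∀ a b : V3, fderiv ℝ (fderiv ℝ U) p a b = fderiv ℝ (fderiv ℝ U) p b a :=
    second_derivative_symmetric (fun y => (hd y).hasFDerivAt) (hd' p).hasFDerivAt
  have h1 : ∀ a : V3, fderiv ℝ (fun q => fderiv ℝ U q a) p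
      = (fderiv ℝ (fderiv ℝ U) p).flip a := by
    intro a
    have := fderiv_clm_apply (c := fderiv ℝ U) (u := fun _ => a) (x := p)
      (hd' p) (differentiableAt_const a)
    simpa [fderiv_const] using this
  show fderiv ℝ (fun q => fderiv ℝ U q w) p v = fderiv ℝ (fun q => fderiv ℝ U q v) p w
  rw [h1 w, h1 v]
  simpa using key v w

lemma Dv_mul {F G : V3 → ℝ} (hF : Differentiable ℝ F) (hG : Differentiable ℝ G) (v : V3)
    (p : V3) : Dv v (fun q => F q * G q) p = Dv v F p * G p + F p * Dv v G p := by
  simp only [Dv]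
  rw [fderiv_fun_mul (hF p) (hG p)]
  simp [mul_comm]
  ring

lemma Dv_add {F G : V3 → ℝ} (hF : Differentiable ℝ F) (hG : Differentiable ℝ G) (v : V3)
    (p : V3) : Dv v (fun q => F q + G q) p = Dv v F p + Dv v G p := by
  simp only [Dv]
  rw [fderiv_fun_add (hF p) (hG p)]
  simp

lemma Dv_const_mul {F : V3 → ℝ} (hF : Differentiable ℝ F) (c : ℝ) (v : V3) (p : V3) :
    Dv v (fun q => c * F q) p = c * Dv v F p := by
  simp only [Dv]
  rw [fderiv_const_mul (hF p) c]
  simp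

/-! ### Bridges between curried partial derivatives and `Dv` -/

lemma pdt_eq {u : ℝ → ℝ → ℝ → ℝ} {U : V3 → ℝ} (hU : Differentiable ℝ U)
    (huU : ∀ t x y, u t x y = U (t, x, y)) (t x y : ℝ) :
    pdt u t x y = Dv E0 U (t, x, y) := by
  have h1 : HasDerivAt (fun s : ℝ => ((s, x, y) : V3)) ((1, 0, 0) : V3) t := by
    have := HasDerivAt.prodMk (hasDerivAt_id t) (hasDerivAt_const t ((x, y) : ℝ × ℝ))
    exact this
  have h2 := (hU (t, x, y)).hasFDerivAt.comp_hasDerivAt t h1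
  have h3 : (fun s : ℝ => u s x y) = fun s => U (s, x, y) := funext fun s => huU s x y
  show deriv (fun s : ℝ => u s x y) t = _
  rw [h3]
  exact h2.deriv

lemma pd1_eq {u : ℝ → ℝ → ℝ → ℝ} {U : V3 → ℝ} (hU : Differentiable ℝ U)
    (huU : ∀ t x y, u t x y = U (t, x, y)) (t x y : ℝ) :
    pd1 u t x y = Dv E1 U (t, x, y) := by
  have h1 : HasDerivAt (fun s : ℝ => ((t, s, y) : V3)) ((0, 1, 0) : V3) x := by
    have := HasDerivAt.prodMk (hasDerivAt_const x t) (HasDerivAt.prodMk (hasDerivAt_id x) (hasDerivAt_const x y))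
    simpa using this
  have h2 := (hU (t, x, y)).hasFDerivAt.comp_hasDerivAt x h1
  have h3 : (fun s : ℝ => u t s y) = fun s => U (t, s, y) := funext fun s => huU t s y
  show deriv (fun s : ℝ => u t s y) x = _
  rw [h3]
  exact h2.deriv

lemma pd2_eq {u : ℝ → ℝ → ℝ → ℝ} {U : V3 → ℝ} (hU : Differentiable ℝ U)
    (huU : ∀ t x y, u t x y = U (t, x, y)) (t x y : ℝ) :
    pd2 u t x y = Dv E2 U (t, x, y) := by
  have h1 : HasDerivAt (fun s : ℝ => ((t, x, s) : V3)) ((0, 0, 1) : V3) y := by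
    have := HasDerivAt.prodMk (hasDerivAt_const y t) (HasDerivAt.prodMk (hasDerivAt_const y x) (hasDerivAt_id y))
    simpa using this
  have h2 := (hU (t, x, y)).hasFDerivAt.comp_hasDerivAt y h1
  have h3 : (fun s : ℝ => u t x s) = fun s => U (t, x, s) := funext fun s => huU t x s
  show deriv (fun s : ℝ => u t x s) y = _
  rw [h3]
  exact h2.deriv

lemma PD_eq (γ : Fin 3) {u : ℝ → ℝ → ℝ → ℝ} {U : V3 → ℝ} (hU : Differentiable ℝ U)
    (huU : ∀ t x y, u t x y = U (t, x, y)) (t x y : ℝ) :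
    PD γ u t x y = Dv (EV γ) U (t, x, y) := by
  fin_cases γ
  · simpa [PD, EV] using pdt_eq hU huU t x y
  · simpa [PD, EV] using pd1_eq hU huU t x y
  · simpa [PD, EV] using pd2_eq hU huU t x y

lemma negBox_eq {u : ℝ → ℝ → ℝ → ℝ} {U : V3 → ℝ} (hU : ContDiff ℝ (⊤ : ℕ∞) U)
    (huU : ∀ t x y, u t x y = U (t, x, y)) (t x y : ℝ) :
    negBox u t x y = Dv E0 (Dv E0 U) (t, x, y) - Dv E1 (Dv E1 U) (t, x, y)
      - Dv E2 (Dv E2 U) (t, x, y) := by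
  have hd : Differentiable ℝ U := hU.differentiable (by simp)
  have h0 : ∀ t x y, pdt u t x y = Dv E0 U (t, x, y) := pdt_eq hd huU
  have h1 : ∀ t x y, pd1 u t x y = Dv E1 U (t, x, y) := pd1_eq hd huU
  have h2 : ∀ t x y, pd2 u t x y = Dv E2 U (t, x, y) := pd2_eq hd huU
  show pdt (pdt u) t x y - pd1 (pd1 u) t x y - pd2 (pd2 u) t x y = _
  rw [pdt_eq (Dv_diff hU E0) h0 t x y, pd1_eq (Dv_diff hU E1) h1 t x y,
    pd2_eq (Dv_diff hU E2) h2 t x y]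
lemma Dv_mul_fun {F G : V3 → ℝ} (hF : Differentiable ℝ F) (hG : Differentiable ℝ G) (v : V3) :
    Dv v (fun q => F q * G q) = fun q => Dv v F q * G q + F q * Dv v G q :=
  funext (Dv_mul hF hG v)

lemma DD_mul (i c : V3) {F G : V3 → ℝ} (hF : ContDiff ℝ (⊤ : ℕ∞) F) (hG : ContDiff ℝ (⊤ : ℕ∞) G) (p : V3) :
    Dv i (Dv i (Dv c (fun q => F q * G q))) p =
      Dv i (Dv i (Dv c F)) p * G p + 2 * Dv i (Dv c F) p * Dv i G p
        + Dv c F p * Dv i (Dv i G) p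
        + Dv i (Dv i F) p * Dv c G p + 2 * Dv i F p * Dv i (Dv c G) p
        + F p * Dv i (Dv i (Dv c G)) p := by
  have dF : Differentiable ℝ F := hF.differentiable (by simp)
  have dG : Differentiable ℝ G := hG.differentiable (by simp)
  have h1 : Dv c (fun q => F q * G q) = fun q => Dv c F q * G q + F q * Dv c G q :=
    Dv_mul_fun dF dG c
  have d1 : Differentiable ℝ (fun q => Dv c F q * G q) := (Dv_diff hF c).mul dG
  have d2 : Differentiable ℝ (fun q => F q * Dv c G q) := dF.mul (Dv_diff hG c)
  have h2 : Dv i (fun q => Dv c F q * G q + F q * Dv c G q)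
      = fun q => (Dv i (Dv c F) q * G q + Dv c F q * Dv i G q)
          + (Dv i F q * Dv c G q + F q * Dv i (Dv c G) q) := by
    funext q
    rw [Dv_add d1 d2, Dv_mul (Dv_diff hF c) dG, Dv_mul dF (Dv_diff hG c)]
  have d3 : Differentiable ℝ (fun q => Dv i (Dv c F) q * G q + Dv c F q * Dv i G q) :=
    ((Dv_diff (Dv_smooth hF c) i).mul dG).add ((Dv_diff hF c).mul (Dv_diff hG i))
  have d4 : Differentiable ℝ (fun q => Dv i F q * Dv c G q + F q * Dv i (Dv c G) q) :=
    ((Dv_diff hF i).mul (Dv_diff hG c)).add (dF.mul (Dv_diff (Dv_smooth hG c) i))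
  rw [h1, h2, Dv_add d3 d4,
    Dv_add (F := fun q => Dv i (Dv c F) q * G q) (G := fun q => Dv c F q * Dv i G q)
      ((Dv_diff (Dv_smooth hF c) i).mul dG) ((Dv_diff hF c).mul (Dv_diff hG i)),
    Dv_add (F := fun q => Dv i F q * Dv c G q) (G := fun q => F q * Dv i (Dv c G) q)
      ((Dv_diff hF i).mul (Dv_diff hG c)) (dF.mul (Dv_diff (Dv_smooth hG c) i)),
    Dv_mul (Dv_diff (Dv_smooth hF c) i) dG,
    Dv_mul (Dv_diff hF c) (Dv_diff hG i),
    Dv_mul (Dv_diff hF i) (Dv_diff hG c),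
    Dv_mul dF (Dv_diff (Dv_smooth hG c) i)]
  ring

lemma key (c : V3) {F G : V3 → ℝ} (hF : ContDiff ℝ (⊤ : ℕ∞) F) (hG : ContDiff ℝ (⊤ : ℕ∞) G) (p : V3) :
    Dv c (fun q => F q * G q) p
      + (1 / 4) * (Dv E0 (Dv E0 (Dv c (fun q => F q * G q))) p
          - Dv E1 (Dv E1 (Dv c (fun q => F q * G q))) p
          - Dv E2 (Dv E2 (Dv c (fun q => F q * G q))) p) =
      (1 / 4) * ((Dv E0 (Dv E0 (Dv c F)) p - Dv E1 (Dv E1 (Dv c F)) p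
            - Dv E2 (Dv E2 (Dv c F)) p) + Dv c F p) * G p
      + (3 / 4) * Dv c F p * ((Dv E0 (Dv E0 G) p - Dv E1 (Dv E1 G) p - Dv E2 (Dv E2 G) p) + G p)
      + (3 / 4) * ((Dv E0 (Dv E0 F) p - Dv E1 (Dv E1 F) p - Dv E2 (Dv E2 F) p) + F p) * Dv c G p
      + (1 / 4) * F p * ((Dv E0 (Dv E0 (Dv c G)) p - Dv E1 (Dv E1 (Dv c G)) p
            - Dv E2 (Dv E2 (Dv c G)) p) + Dv c G p)
      - (1 / 2) * ((-1) * (Dv c (Dv E0 F) p * Dv E0 G p - Dv E0 (Dv E0 F) p * Dv c G p)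
          + (Dv c (Dv E1 F) p * Dv E1 G p - Dv E1 (Dv E1 F) p * Dv c G p)
          + (Dv c (Dv E2 F) p * Dv E2 G p - Dv E2 (Dv E2 F) p * Dv c G p))
      - (1 / 2) * ((-1) * (Dv E0 F p * Dv c (Dv E0 G) p - Dv c F p * Dv E0 (Dv E0 G) p)
          + (Dv E1 F p * Dv c (Dv E1 G) p - Dv c F p * Dv E1 (Dv E1 G) p)
          + (Dv E2 F p * Dv c (Dv E2 G) p - Dv c F p * Dv E2 (Dv E2 G) p)) := by
  have dF : Differentiable ℝ F := hF.differentiable (by simp)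
  have dG : Differentiable ℝ G := hG.differentiable (by simp)
  rw [Dv_mul dF dG, DD_mul E0 c hF hG, DD_mul E1 c hF hG, DD_mul E2 c hF hG,
    Dv_comm hF c E0, Dv_comm hF c E1, Dv_comm hF c E2,
    Dv_comm hG c E0, Dv_comm hG c E1, Dv_comm hG c E2]
  ring
def unc (u : ℝ → ℝ → ℝ → ℝ) : V3 → ℝ := fun p => u p.1 p.2.1 p.2.2

lemma EV0 : EV 0 = E0 := rfl
lemma EV1 : EV 1 = E1 := rfl
lemma EV2 : EV 2 = E2 := rfl
lemma eps0 : eps 0 = -1 := rfl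
lemma eps1 : eps 1 = 1 := rfl
lemma eps2 : eps 2 = 1 := rfl

lemma DD_add_c (i : V3) {W H : V3 → ℝ} (hW : ContDiff ℝ (⊤ : ℕ∞) W) (hH : ContDiff ℝ (⊤ : ℕ∞) H) (c : ℝ)
    (p : V3) :
    Dv i (Dv i (fun q => W q + c * H q)) p = Dv i (Dv i W) p + c * Dv i (Dv i H) p := by
  have dW : Differentiable ℝ W := hW.differentiable (by simp)
  have dH : Differentiable ℝ H := hH.differentiable (by simp)
  have h1 : Dv i (fun q => W q + c * H q) = fun q => Dv i W q + c * Dv i H q := by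
    funext q
    rw [Dv_add dW (dH.const_mul c), Dv_const_mul dH]
  rw [h1, Dv_add (Dv_diff hW i) ((Dv_diff hH i).const_mul c), Dv_const_mul (Dv_diff hH i)]

lemma Qsum1 (γ : Fin 3) (f g : ℝ → ℝ → ℝ → ℝ) (hF : ContDiff ℝ (⊤ : ℕ∞) (unc f))
    (hG : ContDiff ℝ (⊤ : ℕ∞) (unc g)) (t x y : ℝ) :
    (∑ α : Fin 3, Qf γ α (fun s p q => eps α * PD α f s p q) g t x y)
      = (-1) * (Dv (EV γ) (Dv E0 (unc f)) (t, x, y) * Dv E0 (unc g) (t, x, y)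
            - Dv E0 (Dv E0 (unc f)) (t, x, y) * Dv (EV γ) (unc g) (t, x, y))
        + (Dv (EV γ) (Dv E1 (unc f)) (t, x, y) * Dv E1 (unc g) (t, x, y)
            - Dv E1 (Dv E1 (unc f)) (t, x, y) * Dv (EV γ) (unc g) (t, x, y))
        + (Dv (EV γ) (Dv E2 (unc f)) (t, x, y) * Dv E2 (unc g) (t, x, y)
            - Dv E2 (Dv E2 (unc f)) (t, x, y) * Dv (EV γ) (unc g) (t, x, y)) := by
  have dF : Differentiable ℝ (unc f) := hF.differentiable (by simp)
  have dG : Differentiable ℝ (unc g) := hG.differentiable (by simp)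
  have hgG : ∀ t x y, g t x y = unc g (t, x, y) := fun _ _ _ => rfl
  have hfF : ∀ t x y, f t x y = unc f (t, x, y) := fun _ _ _ => rfl
  have hQ : ∀ α : Fin 3, Qf γ α (fun s p q => eps α * PD α f s p q) g t x y
      = eps α * (Dv (EV γ) (Dv (EV α) (unc f)) (t, x, y) * Dv (EV α) (unc g) (t, x, y)
          - Dv (EV α) (Dv (EV α) (unc f)) (t, x, y) * Dv (EV γ) (unc g) (t, x, y)) := by
    intro α
    have hPDa : ∀ t x y, PD α f t x y = Dv (EV α) (unc f) (t, x, y) := PD_eq α dF hfF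
    have hu : ∀ t x y, (fun s p q => eps α * PD α f s p q) t x y
        = (fun q => eps α * Dv (EV α) (unc f) q) (t, x, y) := by
      intro t x y; simp only; rw [hPDa]
    have hUd : Differentiable ℝ (fun q => eps α * Dv (EV α) (unc f) q) :=
      (Dv_diff hF (EV α)).const_mul _
    simp only [Qf]
    rw [PD_eq γ hUd hu, PD_eq α hUd hu, PD_eq α dG hgG, PD_eq γ dG hgG,
      Dv_const_mul (Dv_diff hF (EV α)), Dv_const_mul (Dv_diff hF (EV α))]
    ring
  rw [Fin.sum_univ_three, hQ 0, hQ 1, hQ 2, EV0, EV1, EV2, eps0, eps1, eps2]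
  ring

lemma Qsum2 (γ : Fin 3) (f g : ℝ → ℝ → ℝ → ℝ) (hF : ContDiff ℝ (⊤ : ℕ∞) (unc f))
    (hG : ContDiff ℝ (⊤ : ℕ∞) (unc g)) (t x y : ℝ) :
    (∑ α : Fin 3, Qf α γ f (fun s p q => eps α * PD α g s p q) t x y)
      = (-1) * (Dv E0 (unc f) (t, x, y) * Dv (EV γ) (Dv E0 (unc g)) (t, x, y)
            - Dv (EV γ) (unc f) (t, x, y) * Dv E0 (Dv E0 (unc g)) (t, x, y))
        + (Dv E1 (unc f) (t, x, y) * Dv (EV γ) (Dv E1 (unc g)) (t, x, y)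
            - Dv (EV γ) (unc f) (t, x, y) * Dv E1 (Dv E1 (unc g)) (t, x, y))
        + (Dv E2 (unc f) (t, x, y) * Dv (EV γ) (Dv E2 (unc g)) (t, x, y)
            - Dv (EV γ) (unc f) (t, x, y) * Dv E2 (Dv E2 (unc g)) (t, x, y)) := by
  have dF : Differentiable ℝ (unc f) := hF.differentiable (by simp)
  have dG : Differentiable ℝ (unc g) := hG.differentiable (by simp)
  have hgG : ∀ t x y, g t x y = unc g (t, x, y) := fun _ _ _ => rfl
  have hfF : ∀ t x y, f t x y = unc f (t, x, y) := fun _ _ _ => rfl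
  have hQ : ∀ α : Fin 3, Qf α γ f (fun s p q => eps α * PD α g s p q) t x y
      = eps α * (Dv (EV α) (unc f) (t, x, y) * Dv (EV γ) (Dv (EV α) (unc g)) (t, x, y)
          - Dv (EV γ) (unc f) (t, x, y) * Dv (EV α) (Dv (EV α) (unc g)) (t, x, y)) := by
    intro α
    have hPDa : ∀ t x y, PD α g t x y = Dv (EV α) (unc g) (t, x, y) := PD_eq α dG hgG
    have hu : ∀ t x y, (fun s p q => eps α * PD α g s p q) t x y
        = (fun q => eps α * Dv (EV α) (unc g) q) (t, x, y) := by
      intro t x y; simp only; rw [hPDa]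
    have hUd : Differentiable ℝ (fun q => eps α * Dv (EV α) (unc g) q) :=
      (Dv_diff hG (EV α)).const_mul _
    simp only [Qf]
    rw [PD_eq α dF hfF, PD_eq γ hUd hu, PD_eq γ dF hfF, PD_eq α hUd hu,
      Dv_const_mul (Dv_diff hG (EV α)), Dv_const_mul (Dv_diff hG (EV α))]
    ring
  rw [Fin.sum_univ_three, hQ 0, hQ 1, hQ 2, EV0, EV1, EV2, eps0, eps1, eps2]
  ring
/-- Nonlinear transformation identity: if `-□w = ∂_γ(fg)` and `w̃ = w + (1/4)∂_γ(fg)`, then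
`-□w̃` equals the stated combination of Klein–Gordon operators applied to `f, g` and null
forms `Q`, with the index `α` summed over `0,1,2` using the Minkowski metric. -/
theorem stmt11 (γ : Fin 3) (w f g : ℝ → ℝ → ℝ → ℝ)
    (hw : ContDiff ℝ (⊤ : ℕ∞) (fun p : ℝ × ℝ × ℝ => w p.1 p.2.1 p.2.2))
    (hf : ContDiff ℝ (⊤ : ℕ∞) (fun p : ℝ × ℝ × ℝ => f p.1 p.2.1 p.2.2))
    (hg : ContDiff ℝ (⊤ : ℕ∞) (fun p : ℝ × ℝ × ℝ => g p.1 p.2.1 p.2.2))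
    (heq : ∀ t x y : ℝ,
      negBox w t x y = PD γ (fun t x y => f t x y * g t x y) t x y) :
    ∀ t x y : ℝ,
      negBox (fun t x y =>
          w t x y + (1 / 4) * PD γ (fun s p q => f s p q * g s p q) t x y) t x y =
        (1 / 4) * (negBox (PD γ f) t x y + PD γ f t x y) * g t x y
        + (3 / 4) * PD γ f t x y * (negBox g t x y + g t x y)
        + (3 / 4) * (negBox f t x y + f t x y) * PD γ g t x y
        + (1 / 4) * f t x y * (negBox (PD γ g) t x y + PD γ g t x y)
        - (1 / 2) * ∑ α : Fin 3,
            Qf γ α (fun s p q => eps α * PD α f s p q) g t x y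
        - (1 / 2) * ∑ α : Fin 3,
            Qf α γ f (fun s p q => eps α * PD α g s p q) t x y := by
  intro t x y
  have hF : ContDiff ℝ (⊤ : ℕ∞) (unc f) := hf
  have hG : ContDiff ℝ (⊤ : ℕ∞) (unc g) := hg
  have hW : ContDiff ℝ (⊤ : ℕ∞) (unc w) := hw
  have dF : Differentiable ℝ (unc f) := hF.differentiable (by simp)
  have dG : Differentiable ℝ (unc g) := hG.differentiable (by simp)
  have hfF : ∀ t x y, f t x y = unc f (t, x, y) := fun _ _ _ => rfl
  have hgG : ∀ t x y, g t x y = unc g (t, x, y) := fun _ _ _ => rfl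
  have hwW : ∀ t x y, w t x y = unc w (t, x, y) := fun _ _ _ => rfl
  have hFG : ContDiff ℝ (⊤ : ℕ∞) (fun q => unc f q * unc g q) := hF.mul hG
  have hPf : ∀ t x y, PD γ f t x y = Dv (EV γ) (unc f) (t, x, y) := PD_eq γ dF hfF
  have hPg : ∀ t x y, PD γ g t x y = Dv (EV γ) (unc g) (t, x, y) := PD_eq γ dG hgG
  have hPfg : ∀ t x y, PD γ (fun s p q => f s p q * g s p q) t x y
      = Dv (EV γ) (fun q => unc f q * unc g q) (t, x, y) :=
    PD_eq γ (hFG.differentiable (by simp)) (fun _ _ _ => rfl)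
  -- left-hand side
  have hU' : ContDiff ℝ (⊤ : ℕ∞)
      (fun q => unc w q + 1 / 4 * Dv (EV γ) (fun q => unc f q * unc g q) q) :=
    hW.add (contDiff_const.mul (Dv_smooth hFG (EV γ)))
  have hL := negBox_eq
    (u := fun t x y =>
      w t x y + 1 / 4 * PD γ (fun s p q => f s p q * g s p q) t x y) hU'
    (fun t x y => by simp only [hPfg]; rfl) t x y
  rw [hL,
    DD_add_c E0 hW (Dv_smooth hFG (EV γ)) (1 / 4) (t, x, y),
    DD_add_c E1 hW (Dv_smooth hFG (EV γ)) (1 / 4) (t, x, y),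
    DD_add_c E2 hW (Dv_smooth hFG (EV γ)) (1 / 4) (t, x, y)]
  -- bridged hypothesis
  have heq' : Dv E0 (Dv E0 (unc w)) (t, x, y) - Dv E1 (Dv E1 (unc w)) (t, x, y)
      - Dv E2 (Dv E2 (unc w)) (t, x, y)
      = Dv (EV γ) (fun q => unc f q * unc g q) (t, x, y) := by
    have h := heq t x y
    rw [negBox_eq hW hwW t x y, hPfg t x y] at h
    exact h
  -- right-hand side
  rw [Qsum1 γ f g hF hG t x y, Qsum2 γ f g hF hG t x y,
    negBox_eq (Dv_smooth hF (EV γ)) hPf t x y,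
    negBox_eq (Dv_smooth hG (EV γ)) hPg t x y,
    negBox_eq hF hfF t x y, negBox_eq hG hgG t x y,
    hPf t x y, hPg t x y, hfF t x y, hgG t x y]
  linear_combination key (EV γ) hF hG (t, x, y) + heq'
end

section
/- Let φ : ℝ^{1+2} → ℝ solve -□φ + φ = F (□ = -∂_t² + Δ) in the interior region, let τ = sqrt(t² - |x|²), and set ψ = τφ. Along the integral curve of the vector field L₀/τ = 𝜕̸₀ + (x^a/τ)𝜕̸_a, parameterized by λ with dτ/dλ = 1 (so t(λ) = (t(0)/τ(0))(λ+τ(0)), x_a(λ) = (x_a(0)/τ(0))(λ+τ(0))), ψ satisfies the second-order ODE d²ψ/dλ² + ψ = τ 𝜕̸_a𝜕̸^a φ + (x^a x^b/τ) 𝜕̸_a𝜕̸_b φ + 2(x^a/τ) 𝜕̸_a φ + τF, where 𝜕̸_a = ∂_a + (x_a/t)∂_t and indices a, b are summed over 1, 2. -/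
/-- Semihyperboloidal frame derivative `𝜕̸₁ = ∂₁ + (x₁/t)∂_t`. -/
noncomputable def sd1 (u : ℝ → ℝ → ℝ → ℝ) : ℝ → ℝ → ℝ → ℝ :=
  fun t x y => pd1 u t x y + (x / t) * pdt u t x y

/-- Semihyperboloidal frame derivative `𝜕̸₂ = ∂₂ + (x₂/t)∂_t`. -/
noncomputable def sd2 (u : ℝ → ℝ → ℝ → ℝ) : ℝ → ℝ → ℝ → ℝ :=
  fun t x y => pd2 u t x y + (y / t) * pdt u t x y

namespace Stmt17Aux

lemma sliceT (V : ℝ × ℝ × ℝ → ℝ) (hV : Differentiable ℝ V) (t x y : ℝ) :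
    HasDerivAt (fun s => V (s, x, y)) (fderiv ℝ V (t, x, y) (1, 0, 0)) t := by
  have hc : HasDerivAt (fun s : ℝ => ((s, x, y) : ℝ × ℝ × ℝ)) ((1, 0, 0) : ℝ × ℝ × ℝ) t :=
    (hasDerivAt_id t).prodMk ((hasDerivAt_const t x).prodMk (hasDerivAt_const t y))
  exact (hV (t, x, y)).hasFDerivAt.comp_hasDerivAt t hc

lemma slice1 (V : ℝ × ℝ × ℝ → ℝ) (hV : Differentiable ℝ V) (t x y : ℝ) :
    HasDerivAt (fun s => V (t, s, y)) (fderiv ℝ V (t, x, y) (0, 1, 0)) x := by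
  have hc : HasDerivAt (fun s : ℝ => ((t, s, y) : ℝ × ℝ × ℝ)) ((0, 1, 0) : ℝ × ℝ × ℝ) x :=
    (hasDerivAt_const x t).prodMk ((hasDerivAt_id x).prodMk (hasDerivAt_const x y))
  exact (hV (t, x, y)).hasFDerivAt.comp_hasDerivAt x hc

lemma slice2 (V : ℝ × ℝ × ℝ → ℝ) (hV : Differentiable ℝ V) (t x y : ℝ) :
    HasDerivAt (fun s => V (t, x, s)) (fderiv ℝ V (t, x, y) (0, 0, 1)) y := by
  have hc : HasDerivAt (fun s : ℝ => ((t, x, s) : ℝ × ℝ × ℝ)) ((0, 0, 1) : ℝ × ℝ × ℝ) y :=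
    (hasDerivAt_const y t).prodMk ((hasDerivAt_const y x).prodMk (hasDerivAt_id y))
  exact (hV (t, x, y)).hasFDerivAt.comp_hasDerivAt y hc

lemma pdt_eq (u : ℝ → ℝ → ℝ → ℝ) (hu : Differentiable ℝ (fun p : ℝ × ℝ × ℝ => u p.1 p.2.1 p.2.2))
    (t x y : ℝ) :
    pdt u t x y = fderiv ℝ (fun p : ℝ × ℝ × ℝ => u p.1 p.2.1 p.2.2) (t, x, y) (1, 0, 0) :=
  (sliceT _ hu t x y).deriv

lemma pd1_eq (u : ℝ → ℝ → ℝ → ℝ) (hu : Differentiable ℝ (fun p : ℝ × ℝ × ℝ => u p.1 p.2.1 p.2.2))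
    (t x y : ℝ) :
    pd1 u t x y = fderiv ℝ (fun p : ℝ × ℝ × ℝ => u p.1 p.2.1 p.2.2) (t, x, y) (0, 1, 0) :=
  (slice1 _ hu t x y).deriv

lemma pd2_eq (u : ℝ → ℝ → ℝ → ℝ) (hu : Differentiable ℝ (fun p : ℝ × ℝ × ℝ => u p.1 p.2.1 p.2.2))
    (t x y : ℝ) :
    pd2 u t x y = fderiv ℝ (fun p : ℝ × ℝ × ℝ => u p.1 p.2.1 p.2.2) (t, x, y) (0, 0, 1) :=
  (slice2 _ hu t x y).deriv

lemma contDiff_D (V : ℝ × ℝ × ℝ → ℝ) (hV : ContDiff ℝ (⊤ : ℕ∞) V) (w : ℝ × ℝ × ℝ) :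
    ContDiff ℝ (⊤ : ℕ∞) (fun p => fderiv ℝ V p w) :=
  (hV.fderiv_right (by simp)).clm_apply contDiff_const

lemma fderiv_D (V : ℝ × ℝ × ℝ → ℝ) (hV : ContDiff ℝ (⊤ : ℕ∞) V) (p v w : ℝ × ℝ × ℝ) :
    fderiv ℝ (fun q => fderiv ℝ V q w) p v = fderiv ℝ (fderiv ℝ V) p v w := by
  rw [fderiv_clm_apply ((hV.fderiv_right (m := (⊤ : ℕ∞)) (by simp)).differentiable (by simp) p)
    (differentiableAt_const w)]
  simp

lemma sym_D (V : ℝ × ℝ × ℝ → ℝ) (hV : ContDiff ℝ (⊤ : ℕ∞) V) (p v w : ℝ × ℝ × ℝ) :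
    fderiv ℝ (fderiv ℝ V) p v w = fderiv ℝ (fderiv ℝ V) p w v :=
  second_derivative_symmetric (fun y => (hV.differentiable (by simp) y).hasFDerivAt)
    (((hV.fderiv_right (m := (⊤ : ℕ∞)) (by simp)).differentiable (by simp) p).hasFDerivAt) v w


variable (V W : ℝ × ℝ × ℝ → ℝ)

lemma g1_pd1 (hV : Differentiable ℝ V) (hW : Differentiable ℝ W) (t x y : ℝ) :
    pd1 (fun t x y => V (t, x, y) + (x / t) * W (t, x, y)) t x y
      = fderiv ℝ V (t, x, y) (0, 1, 0)
        + ((1 / t) * W (t, x, y) + (x / t) * fderiv ℝ W (t, x, y) (0, 1, 0)) := by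
  have h := (slice1 V hV t x y).add
    (((hasDerivAt_id x).div_const t).mul (slice1 W hW t x y))
  exact h.deriv

lemma g1_pd2 (hV : Differentiable ℝ V) (hW : Differentiable ℝ W) (t x y : ℝ) :
    pd2 (fun t x y => V (t, x, y) + (x / t) * W (t, x, y)) t x y
      = fderiv ℝ V (t, x, y) (0, 0, 1) + (x / t) * fderiv ℝ W (t, x, y) (0, 0, 1) := by
  have h := (slice2 V hV t x y).add
    ((hasDerivAt_const y (x / t)).mul (slice2 W hW t x y))
  rw [zero_mul, zero_add] at h
  exact h.deriv

lemma g1_pdt (hV : Differentiable ℝ V) (hW : Differentiable ℝ W) (t x y : ℝ) (ht : t ≠ 0) :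
    pdt (fun t x y => V (t, x, y) + (x / t) * W (t, x, y)) t x y
      = fderiv ℝ V (t, x, y) (1, 0, 0)
        + (x * -(t ^ 2)⁻¹ * W (t, x, y) + (x / t) * fderiv ℝ W (t, x, y) (1, 0, 0)) := by
  have h := (sliceT V hV t x y).add
    (((hasDerivAt_inv ht).const_mul x).mul (sliceT W hW t x y))
  simp only [pdt, div_eq_mul_inv]
  exact h.deriv

lemma g2_pd1 (hV : Differentiable ℝ V) (hW : Differentiable ℝ W) (t x y : ℝ) :
    pd1 (fun t x y => V (t, x, y) + (y / t) * W (t, x, y)) t x y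
      = fderiv ℝ V (t, x, y) (0, 1, 0) + (y / t) * fderiv ℝ W (t, x, y) (0, 1, 0) := by
  have h := (slice1 V hV t x y).add
    ((hasDerivAt_const x (y / t)).mul (slice1 W hW t x y))
  rw [zero_mul, zero_add] at h
  exact h.deriv

lemma g2_pd2 (hV : Differentiable ℝ V) (hW : Differentiable ℝ W) (t x y : ℝ) :
    pd2 (fun t x y => V (t, x, y) + (y / t) * W (t, x, y)) t x y
      = fderiv ℝ V (t, x, y) (0, 0, 1)
        + ((1 / t) * W (t, x, y) + (y / t) * fderiv ℝ W (t, x, y) (0, 0, 1)) := by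
  have h := (slice2 V hV t x y).add
    (((hasDerivAt_id y).div_const t).mul (slice2 W hW t x y))
  exact h.deriv

lemma g2_pdt (hV : Differentiable ℝ V) (hW : Differentiable ℝ W) (t x y : ℝ) (ht : t ≠ 0) :
    pdt (fun t x y => V (t, x, y) + (y / t) * W (t, x, y)) t x y
      = fderiv ℝ V (t, x, y) (1, 0, 0)
        + (y * -(t ^ 2)⁻¹ * W (t, x, y) + (y / t) * fderiv ℝ W (t, x, y) (1, 0, 0)) := by
  have h := (sliceT V hV t x y).add
    (((hasDerivAt_inv ht).const_mul y).mul (sliceT W hW t x y))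
  simp only [pdt, div_eq_mul_inv]
  exact h.deriv


section vals

variable (u : ℝ → ℝ → ℝ → ℝ)

lemma sd1_fun (hu : ContDiff ℝ (⊤ : ℕ∞) (fun p : ℝ × ℝ × ℝ => u p.1 p.2.1 p.2.2)) :
    sd1 u = fun t x y =>
      (fun p : ℝ × ℝ × ℝ => fderiv ℝ (fun p : ℝ × ℝ × ℝ => u p.1 p.2.1 p.2.2) p (0, 1, 0)) (t, x, y)
      + (x / t) *
        (fun p : ℝ × ℝ × ℝ => fderiv ℝ (fun p : ℝ × ℝ × ℝ => u p.1 p.2.1 p.2.2) p (1, 0, 0)) (t, x, y) := by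
  funext t x y
  simp only [sd1]
  rw [pd1_eq u (hu.differentiable (by simp)), pdt_eq u (hu.differentiable (by simp))]

lemma sd2_fun (hu : ContDiff ℝ (⊤ : ℕ∞) (fun p : ℝ × ℝ × ℝ => u p.1 p.2.1 p.2.2)) :
    sd2 u = fun t x y =>
      (fun p : ℝ × ℝ × ℝ => fderiv ℝ (fun p : ℝ × ℝ × ℝ => u p.1 p.2.1 p.2.2) p (0, 0, 1)) (t, x, y)
      + (y / t) *
        (fun p : ℝ × ℝ × ℝ => fderiv ℝ (fun p : ℝ × ℝ × ℝ => u p.1 p.2.1 p.2.2) p (1, 0, 0)) (t, x, y) := by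
  funext t x y
  simp only [sd2]
  rw [pd2_eq u (hu.differentiable (by simp)), pdt_eq u (hu.differentiable (by simp))]

variable (t x y : ℝ)

lemma sd1_val (hu : ContDiff ℝ (⊤ : ℕ∞) (fun p : ℝ × ℝ × ℝ => u p.1 p.2.1 p.2.2)) :
    sd1 u t x y = fderiv ℝ (fun p : ℝ × ℝ × ℝ => u p.1 p.2.1 p.2.2) (t, x, y) (0, 1, 0)
      + (x / t) * fderiv ℝ (fun p : ℝ × ℝ × ℝ => u p.1 p.2.1 p.2.2) (t, x, y) (1, 0, 0) := by
  rw [sd1_fun u hu]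

lemma sd2_val (hu : ContDiff ℝ (⊤ : ℕ∞) (fun p : ℝ × ℝ × ℝ => u p.1 p.2.1 p.2.2)) :
    sd2 u t x y = fderiv ℝ (fun p : ℝ × ℝ × ℝ => u p.1 p.2.1 p.2.2) (t, x, y) (0, 0, 1)
      + (y / t) * fderiv ℝ (fun p : ℝ × ℝ × ℝ => u p.1 p.2.1 p.2.2) (t, x, y) (1, 0, 0) := by
  rw [sd2_fun u hu]

lemma sd1sd1_val (hu : ContDiff ℝ (⊤ : ℕ∞) (fun p : ℝ × ℝ × ℝ => u p.1 p.2.1 p.2.2)) (ht : t ≠ 0) :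
    sd1 (sd1 u) t x y =
      (fderiv ℝ (fderiv ℝ (fun p : ℝ × ℝ × ℝ => u p.1 p.2.1 p.2.2)) (t, x, y) (0, 1, 0) (0, 1, 0)
        + ((1 / t) * fderiv ℝ (fun p : ℝ × ℝ × ℝ => u p.1 p.2.1 p.2.2) (t, x, y) (1, 0, 0)
          + (x / t) * fderiv ℝ (fderiv ℝ (fun p : ℝ × ℝ × ℝ => u p.1 p.2.1 p.2.2)) (t, x, y) (0, 1, 0) (1, 0, 0)))
      + (x / t) *
        (fderiv ℝ (fderiv ℝ (fun p : ℝ × ℝ × ℝ => u p.1 p.2.1 p.2.2)) (t, x, y) (1, 0, 0) (0, 1, 0)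
          + (x * -(t ^ 2)⁻¹ * fderiv ℝ (fun p : ℝ × ℝ × ℝ => u p.1 p.2.1 p.2.2) (t, x, y) (1, 0, 0)
            + (x / t) * fderiv ℝ (fderiv ℝ (fun p : ℝ × ℝ × ℝ => u p.1 p.2.1 p.2.2)) (t, x, y) (1, 0, 0) (1, 0, 0))) := by
  have hD1 : Differentiable ℝ (fun p : ℝ × ℝ × ℝ => fderiv ℝ (fun p : ℝ × ℝ × ℝ => u p.1 p.2.1 p.2.2) p (1, 0, 0)) :=
    (contDiff_D _ hu _).differentiable (by simp)
  have hD2 : Differentiable ℝ (fun p : ℝ × ℝ × ℝ => fderiv ℝ (fun p : ℝ × ℝ × ℝ => u p.1 p.2.1 p.2.2) p (0, 1, 0)) :=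
    (contDiff_D _ hu _).differentiable (by simp)
  rw [sd1_fun u hu]
  simp only [sd1]
  rw [g1_pd1 _ _ hD2 hD1, g1_pdt _ _ hD2 hD1 _ _ _ ht,
    fderiv_D _ hu, fderiv_D _ hu, fderiv_D _ hu, fderiv_D _ hu]

lemma sd2sd2_val (hu : ContDiff ℝ (⊤ : ℕ∞) (fun p : ℝ × ℝ × ℝ => u p.1 p.2.1 p.2.2)) (ht : t ≠ 0) :
    sd2 (sd2 u) t x y =
      (fderiv ℝ (fderiv ℝ (fun p : ℝ × ℝ × ℝ => u p.1 p.2.1 p.2.2)) (t, x, y) (0, 0, 1) (0, 0, 1)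
        + ((1 / t) * fderiv ℝ (fun p : ℝ × ℝ × ℝ => u p.1 p.2.1 p.2.2) (t, x, y) (1, 0, 0)
          + (y / t) * fderiv ℝ (fderiv ℝ (fun p : ℝ × ℝ × ℝ => u p.1 p.2.1 p.2.2)) (t, x, y) (0, 0, 1) (1, 0, 0)))
      + (y / t) *
        (fderiv ℝ (fderiv ℝ (fun p : ℝ × ℝ × ℝ => u p.1 p.2.1 p.2.2)) (t, x, y) (1, 0, 0) (0, 0, 1)
          + (y * -(t ^ 2)⁻¹ * fderiv ℝ (fun p : ℝ × ℝ × ℝ => u p.1 p.2.1 p.2.2) (t, x, y) (1, 0, 0)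
            + (y / t) * fderiv ℝ (fderiv ℝ (fun p : ℝ × ℝ × ℝ => u p.1 p.2.1 p.2.2)) (t, x, y) (1, 0, 0) (1, 0, 0))) := by
  have hD1 : Differentiable ℝ (fun p : ℝ × ℝ × ℝ => fderiv ℝ (fun p : ℝ × ℝ × ℝ => u p.1 p.2.1 p.2.2) p (1, 0, 0)) :=
    (contDiff_D _ hu _).differentiable (by simp)
  have hD3 : Differentiable ℝ (fun p : ℝ × ℝ × ℝ => fderiv ℝ (fun p : ℝ × ℝ × ℝ => u p.1 p.2.1 p.2.2) p (0, 0, 1)) :=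
    (contDiff_D _ hu _).differentiable (by simp)
  rw [sd2_fun u hu]
  simp only [sd2]
  rw [g2_pd2 _ _ hD3 hD1, g2_pdt _ _ hD3 hD1 _ _ _ ht,
    fderiv_D _ hu, fderiv_D _ hu, fderiv_D _ hu, fderiv_D _ hu]

lemma sd1sd2_val (hu : ContDiff ℝ (⊤ : ℕ∞) (fun p : ℝ × ℝ × ℝ => u p.1 p.2.1 p.2.2)) (ht : t ≠ 0) :
    sd1 (sd2 u) t x y =
      (fderiv ℝ (fderiv ℝ (fun p : ℝ × ℝ × ℝ => u p.1 p.2.1 p.2.2)) (t, x, y) (0, 1, 0) (0, 0, 1)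
        + (y / t) * fderiv ℝ (fderiv ℝ (fun p : ℝ × ℝ × ℝ => u p.1 p.2.1 p.2.2)) (t, x, y) (0, 1, 0) (1, 0, 0))
      + (x / t) *
        (fderiv ℝ (fderiv ℝ (fun p : ℝ × ℝ × ℝ => u p.1 p.2.1 p.2.2)) (t, x, y) (1, 0, 0) (0, 0, 1)
          + (y * -(t ^ 2)⁻¹ * fderiv ℝ (fun p : ℝ × ℝ × ℝ => u p.1 p.2.1 p.2.2) (t, x, y) (1, 0, 0)
            + (y / t) * fderiv ℝ (fderiv ℝ (fun p : ℝ × ℝ × ℝ => u p.1 p.2.1 p.2.2)) (t, x, y) (1, 0, 0) (1, 0, 0))) := by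
  have hD1 : Differentiable ℝ (fun p : ℝ × ℝ × ℝ => fderiv ℝ (fun p : ℝ × ℝ × ℝ => u p.1 p.2.1 p.2.2) p (1, 0, 0)) :=
    (contDiff_D _ hu _).differentiable (by simp)
  have hD3 : Differentiable ℝ (fun p : ℝ × ℝ × ℝ => fderiv ℝ (fun p : ℝ × ℝ × ℝ => u p.1 p.2.1 p.2.2) p (0, 0, 1)) :=
    (contDiff_D _ hu _).differentiable (by simp)
  rw [sd2_fun u hu]
  simp only [sd1]
  rw [g2_pd1 _ _ hD3 hD1, g2_pdt _ _ hD3 hD1 _ _ _ ht,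
    fderiv_D _ hu, fderiv_D _ hu, fderiv_D _ hu, fderiv_D _ hu]

lemma sd2sd1_val (hu : ContDiff ℝ (⊤ : ℕ∞) (fun p : ℝ × ℝ × ℝ => u p.1 p.2.1 p.2.2)) (ht : t ≠ 0) :
    sd2 (sd1 u) t x y =
      (fderiv ℝ (fderiv ℝ (fun p : ℝ × ℝ × ℝ => u p.1 p.2.1 p.2.2)) (t, x, y) (0, 0, 1) (0, 1, 0)
        + (x / t) * fderiv ℝ (fderiv ℝ (fun p : ℝ × ℝ × ℝ => u p.1 p.2.1 p.2.2)) (t, x, y) (0, 0, 1) (1, 0, 0))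
      + (y / t) *
        (fderiv ℝ (fderiv ℝ (fun p : ℝ × ℝ × ℝ => u p.1 p.2.1 p.2.2)) (t, x, y) (1, 0, 0) (0, 1, 0)
          + (x * -(t ^ 2)⁻¹ * fderiv ℝ (fun p : ℝ × ℝ × ℝ => u p.1 p.2.1 p.2.2) (t, x, y) (1, 0, 0)
            + (x / t) * fderiv ℝ (fderiv ℝ (fun p : ℝ × ℝ × ℝ => u p.1 p.2.1 p.2.2)) (t, x, y) (1, 0, 0) (1, 0, 0))) := by
  have hD1 : Differentiable ℝ (fun p : ℝ × ℝ × ℝ => fderiv ℝ (fun p : ℝ × ℝ × ℝ => u p.1 p.2.1 p.2.2) p (1, 0, 0)) :=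
    (contDiff_D _ hu _).differentiable (by simp)
  have hD2 : Differentiable ℝ (fun p : ℝ × ℝ × ℝ => fderiv ℝ (fun p : ℝ × ℝ × ℝ => u p.1 p.2.1 p.2.2) p (0, 1, 0)) :=
    (contDiff_D _ hu _).differentiable (by simp)
  rw [sd1_fun u hu]
  simp only [sd2]
  rw [g1_pd2 _ _ hD2 hD1, g1_pdt _ _ hD2 hD1 _ _ _ ht,
    fderiv_D _ hu, fderiv_D _ hu, fderiv_D _ hu, fderiv_D _ hu]

lemma pdtpdt_val (hu : ContDiff ℝ (⊤ : ℕ∞) (fun p : ℝ × ℝ × ℝ => u p.1 p.2.1 p.2.2)) :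
    pdt (pdt u) t x y =
      fderiv ℝ (fderiv ℝ (fun p : ℝ × ℝ × ℝ => u p.1 p.2.1 p.2.2)) (t, x, y) (1, 0, 0) (1, 0, 0) := by
  have h1 : pdt u = fun t x y =>
      (fun p : ℝ × ℝ × ℝ => fderiv ℝ (fun p : ℝ × ℝ × ℝ => u p.1 p.2.1 p.2.2) p (1, 0, 0)) (t, x, y) := by
    funext t x y; exact pdt_eq u (hu.differentiable (by simp)) t x y
  rw [h1, pdt_eq _ ((contDiff_D _ hu _).differentiable (by simp)), fderiv_D _ hu]

lemma pd1pd1_val (hu : ContDiff ℝ (⊤ : ℕ∞) (fun p : ℝ × ℝ × ℝ => u p.1 p.2.1 p.2.2)) :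
    pd1 (pd1 u) t x y =
      fderiv ℝ (fderiv ℝ (fun p : ℝ × ℝ × ℝ => u p.1 p.2.1 p.2.2)) (t, x, y) (0, 1, 0) (0, 1, 0) := by
  have h1 : pd1 u = fun t x y =>
      (fun p : ℝ × ℝ × ℝ => fderiv ℝ (fun p : ℝ × ℝ × ℝ => u p.1 p.2.1 p.2.2) p (0, 1, 0)) (t, x, y) := by
    funext t x y; exact pd1_eq u (hu.differentiable (by simp)) t x y
  rw [h1, pd1_eq _ ((contDiff_D _ hu _).differentiable (by simp)), fderiv_D _ hu]

lemma pd2pd2_val (hu : ContDiff ℝ (⊤ : ℕ∞) (fun p : ℝ × ℝ × ℝ => u p.1 p.2.1 p.2.2)) :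
    pd2 (pd2 u) t x y =
      fderiv ℝ (fderiv ℝ (fun p : ℝ × ℝ × ℝ => u p.1 p.2.1 p.2.2)) (t, x, y) (0, 0, 1) (0, 0, 1) := by
  have h1 : pd2 u = fun t x y =>
      (fun p : ℝ × ℝ × ℝ => fderiv ℝ (fun p : ℝ × ℝ × ℝ => u p.1 p.2.1 p.2.2) p (0, 0, 1)) (t, x, y) := by
    funext t x y; exact pd2_eq u (hu.differentiable (by simp)) t x y
  rw [h1, pd2_eq _ ((contDiff_D _ hu _).differentiable (by simp)), fderiv_D _ hu]

end vals

end Stmt17Aux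

set_option maxHeartbeats 2000000 in
open Stmt17Aux in
/-- Along the integral curve of `L₀/τ` through a point of the interior hyperboloidal
region, `ψ = τφ` solves the ODE
`ψ'' + ψ = τ 𝜕̸_a𝜕̸^a φ + (x^a x^b/τ)𝜕̸_a𝜕̸_b φ + 2(x^a/τ)𝜕̸_a φ + τF`,
where `φ` solves `-□φ + φ = F` and the curve is
`t(λ) = (t₀/τ₀)(λ+τ₀)`, `x(λ) = (x₀/τ₀)(λ+τ₀)`, `τ(λ) = λ + τ₀`. -/
theorem stmt17 (φ F : ℝ → ℝ → ℝ → ℝ)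
    (hφ : ContDiff ℝ (⊤ : ℕ∞) (fun p : ℝ × ℝ × ℝ => φ p.1 p.2.1 p.2.2))
    (hF : ContDiff ℝ (⊤ : ℕ∞) (fun p : ℝ × ℝ × ℝ => F p.1 p.2.1 p.2.2))
    (heq : ∀ t x y : ℝ,
      pdt (pdt φ) t x y - pd1 (pd1 φ) t x y - pd2 (pd2 φ) t x y + φ t x y = F t x y)
    (t0 x0 y0 τ0 : ℝ)
    (hτ0 : τ0 = Real.sqrt (t0 ^ 2 - x0 ^ 2 - y0 ^ 2))
    (hreg1 : Real.sqrt (x0 ^ 2 + y0 ^ 2) ≤ t0 - 1)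
    (hreg2 : 1 ≤ t0 ^ 2 - x0 ^ 2 - y0 ^ 2) :
    ∀ l : ℝ, 0 ≤ l →
      deriv (deriv (fun lam : ℝ =>
          (lam + τ0) * φ ((t0 / τ0) * (lam + τ0)) ((x0 / τ0) * (lam + τ0))
            ((y0 / τ0) * (lam + τ0)))) l
        + (l + τ0) * φ ((t0 / τ0) * (l + τ0)) ((x0 / τ0) * (l + τ0))
            ((y0 / τ0) * (l + τ0)) =
      (fun t x y : ℝ =>
        let τ := l + τ0
        τ * (sd1 (sd1 φ) t x y + sd2 (sd2 φ) t x y)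
          + (1 / τ) * (x * x * sd1 (sd1 φ) t x y + x * y * sd1 (sd2 φ) t x y
              + y * x * sd2 (sd1 φ) t x y + y * y * sd2 (sd2 φ) t x y)
          + (2 / τ) * (x * sd1 φ t x y + y * sd2 φ t x y)
          + τ * F t x y)
        ((t0 / τ0) * (l + τ0)) ((x0 / τ0) * (l + τ0)) ((y0 / τ0) * (l + τ0)) := by
  intro l hl
  have hτpos : (1:ℝ) ≤ τ0 := by
    rw [hτ0]
    have h := Real.sqrt_le_sqrt hreg2
    simpa using h
  have ht0pos : (1:ℝ) ≤ t0 := by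
    have := Real.sqrt_nonneg (x0 ^ 2 + y0 ^ 2); linarith
  have hτsq : τ0 ^ 2 = t0 ^ 2 - x0 ^ 2 - y0 ^ 2 := by
    rw [hτ0]; exact Real.sq_sqrt (by linarith)
  set a := t0 / τ0 with ha
  set b := x0 / τ0 with hb
  set c := y0 / τ0 with hc
  set s := l + τ0 with hsdef
  have hτne : τ0 ≠ 0 := by intro h; rw [h] at hτpos; linarith
  have hspos : (0:ℝ) < s := by rw [hsdef]; linarith
  have hsne : s ≠ 0 := ne_of_gt hspos
  have hapos : (0:ℝ) < a := by rw [ha]; exact div_pos (by linarith) (by linarith)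
  have hane : a ≠ 0 := ne_of_gt hapos
  have htne : a * s ≠ 0 := mul_ne_zero hane hsne
  have hrel : a ^ 2 - b ^ 2 - c ^ 2 = 1 := by
    rw [ha, hb, hc]
    field_simp
    linarith [hτsq]
  -- curve
  have hγ : ∀ lam : ℝ, HasDerivAt
      (fun lam : ℝ => ((a * (lam + τ0), b * (lam + τ0), c * (lam + τ0)) : ℝ × ℝ × ℝ))
      ((a, b, c) : ℝ × ℝ × ℝ) lam := by
    intro lam
    have h1 : HasDerivAt (fun lam : ℝ => a * (lam + τ0)) a lam := by
      simpa using ((hasDerivAt_id lam).add_const τ0).const_mul a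
    have h2 : HasDerivAt (fun lam : ℝ => b * (lam + τ0)) b lam := by
      simpa using ((hasDerivAt_id lam).add_const τ0).const_mul b
    have h3 : HasDerivAt (fun lam : ℝ => c * (lam + τ0)) c lam := by
      simpa using ((hasDerivAt_id lam).add_const τ0).const_mul c
    exact h1.prodMk (h2.prodMk h3)
  have chain : ∀ (V : ℝ × ℝ × ℝ → ℝ), ContDiff ℝ (⊤ : ℕ∞) V → ∀ lam : ℝ,
      HasDerivAt (fun lam : ℝ => V (a * (lam + τ0), b * (lam + τ0), c * (lam + τ0)))
        (fderiv ℝ V (a * (lam + τ0), b * (lam + τ0), c * (lam + τ0)) (a, b, c)) lam :=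
    fun V hV lam => ((hV.differentiable (by simp) _).hasFDerivAt).comp_hasDerivAt lam (hγ lam)
  have hψ : deriv (fun lam : ℝ =>
        (lam + τ0) * φ (a * (lam + τ0)) (b * (lam + τ0)) (c * (lam + τ0)))
      = fun lam : ℝ => φ (a * (lam + τ0)) (b * (lam + τ0)) (c * (lam + τ0))
        + (lam + τ0) * fderiv ℝ (fun p : ℝ × ℝ × ℝ => φ p.1 p.2.1 p.2.2)
            (a * (lam + τ0), b * (lam + τ0), c * (lam + τ0)) (a, b, c) := by
    funext lam
    have h := (((hasDerivAt_id lam).add_const τ0).mul (chain _ hφ lam))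
    rw [one_mul] at h
    exact h.deriv
  have hDcd : ContDiff ℝ (⊤ : ℕ∞) (fun p : ℝ × ℝ × ℝ =>
      fderiv ℝ (fun p : ℝ × ℝ × ℝ => φ p.1 p.2.1 p.2.2) p ((a, b, c) : ℝ × ℝ × ℝ)) :=
    contDiff_D _ hφ _
  have h2' : HasDerivAt (fun lam : ℝ => φ (a * (lam + τ0)) (b * (lam + τ0)) (c * (lam + τ0))
        + (lam + τ0) * fderiv ℝ (fun p : ℝ × ℝ × ℝ => φ p.1 p.2.1 p.2.2)
            (a * (lam + τ0), b * (lam + τ0), c * (lam + τ0)) (a, b, c))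
      (fderiv ℝ (fun p : ℝ × ℝ × ℝ => φ p.1 p.2.1 p.2.2) (a * s, b * s, c * s) (a, b, c)
        + (1 * fderiv ℝ (fun p : ℝ × ℝ × ℝ => φ p.1 p.2.1 p.2.2) (a * s, b * s, c * s) (a, b, c)
          + s * fderiv ℝ (fun p : ℝ × ℝ × ℝ =>
              fderiv ℝ (fun p : ℝ × ℝ × ℝ => φ p.1 p.2.1 p.2.2) p ((a, b, c) : ℝ × ℝ × ℝ))
              (a * s, b * s, c * s) (a, b, c))) l := by
    exact (chain _ hφ l).add (((hasDerivAt_id l).add_const τ0).mul (chain _ hDcd l))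
  rw [hψ, h2'.deriv, fderiv_D _ hφ]
  have hv0 : ((a, b, c) : ℝ × ℝ × ℝ)
      = a • ((1, 0, 0) : ℝ × ℝ × ℝ) + b • ((0, 1, 0) : ℝ × ℝ × ℝ) + c • ((0, 0, 1) : ℝ × ℝ × ℝ) := by
    simp [Prod.ext_iff]
  have hG : fderiv ℝ (fun p : ℝ × ℝ × ℝ => φ p.1 p.2.1 p.2.2) (a * s, b * s, c * s) (a, b, c)
      = a * fderiv ℝ (fun p : ℝ × ℝ × ℝ => φ p.1 p.2.1 p.2.2) (a * s, b * s, c * s) (1, 0, 0)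
        + b * fderiv ℝ (fun p : ℝ × ℝ × ℝ => φ p.1 p.2.1 p.2.2) (a * s, b * s, c * s) (0, 1, 0)
        + c * fderiv ℝ (fun p : ℝ × ℝ × ℝ => φ p.1 p.2.1 p.2.2) (a * s, b * s, c * s) (0, 0, 1) := by
    rw [hv0]
    simp only [map_add, map_smul, smul_eq_mul]
  have hB : fderiv ℝ (fderiv ℝ (fun p : ℝ × ℝ × ℝ => φ p.1 p.2.1 p.2.2)) (a * s, b * s, c * s)
        (a, b, c) (a, b, c)
      = a * (a * fderiv ℝ (fderiv ℝ (fun p : ℝ × ℝ × ℝ => φ p.1 p.2.1 p.2.2)) (a * s, b * s, c * s) (1, 0, 0) (1, 0, 0)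
            + b * fderiv ℝ (fderiv ℝ (fun p : ℝ × ℝ × ℝ => φ p.1 p.2.1 p.2.2)) (a * s, b * s, c * s) (1, 0, 0) (0, 1, 0)
            + c * fderiv ℝ (fderiv ℝ (fun p : ℝ × ℝ × ℝ => φ p.1 p.2.1 p.2.2)) (a * s, b * s, c * s) (1, 0, 0) (0, 0, 1))
        + b * (a * fderiv ℝ (fderiv ℝ (fun p : ℝ × ℝ × ℝ => φ p.1 p.2.1 p.2.2)) (a * s, b * s, c * s) (0, 1, 0) (1, 0, 0)
            + b * fderiv ℝ (fderiv ℝ (fun p : ℝ × ℝ × ℝ => φ p.1 p.2.1 p.2.2)) (a * s, b * s, c * s) (0, 1, 0) (0, 1, 0)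
            + c * fderiv ℝ (fderiv ℝ (fun p : ℝ × ℝ × ℝ => φ p.1 p.2.1 p.2.2)) (a * s, b * s, c * s) (0, 1, 0) (0, 0, 1))
        + c * (a * fderiv ℝ (fderiv ℝ (fun p : ℝ × ℝ × ℝ => φ p.1 p.2.1 p.2.2)) (a * s, b * s, c * s) (0, 0, 1) (1, 0, 0)
            + b * fderiv ℝ (fderiv ℝ (fun p : ℝ × ℝ × ℝ => φ p.1 p.2.1 p.2.2)) (a * s, b * s, c * s) (0, 0, 1) (0, 1, 0)
            + c * fderiv ℝ (fderiv ℝ (fun p : ℝ × ℝ × ℝ => φ p.1 p.2.1 p.2.2)) (a * s, b * s, c * s) (0, 0, 1) (0, 0, 1)) := by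
    rw [hv0]
    simp only [map_add, map_smul, ContinuousLinearMap.add_apply, ContinuousLinearMap.coe_smul',
      Pi.smul_apply, smul_eq_mul]
    ring
  have hsym21 := sym_D _ hφ ((a * s, b * s, c * s) : ℝ × ℝ × ℝ)
      ((0, 1, 0) : ℝ × ℝ × ℝ) ((1, 0, 0) : ℝ × ℝ × ℝ)
  have hsym31 := sym_D _ hφ ((a * s, b * s, c * s) : ℝ × ℝ × ℝ)
      ((0, 0, 1) : ℝ × ℝ × ℝ) ((1, 0, 0) : ℝ × ℝ × ℝ)
  have hsym32 := sym_D _ hφ ((a * s, b * s, c * s) : ℝ × ℝ × ℝ)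
      ((0, 0, 1) : ℝ × ℝ × ℝ) ((0, 1, 0) : ℝ × ℝ × ℝ)
  simp only [hG, hB,
    sd1sd1_val φ (a * s) (b * s) (c * s) hφ htne,
    sd2sd2_val φ (a * s) (b * s) (c * s) hφ htne,
    sd1sd2_val φ (a * s) (b * s) (c * s) hφ htne,
    sd2sd1_val φ (a * s) (b * s) (c * s) hφ htne,
    sd1_val φ (a * s) (b * s) (c * s) hφ,
    sd2_val φ (a * s) (b * s) (c * s) hφ,
    (heq (a * s) (b * s) (c * s)).symm,
    pdtpdt_val φ (a * s) (b * s) (c * s) hφ,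
    pd1pd1_val φ (a * s) (b * s) (c * s) hφ,
    pd2pd2_val φ (a * s) (b * s) (c * s) hφ,
    hsym21, hsym31, hsym32]
  generalize hB11 : fderiv ℝ (fderiv ℝ fun p : ℝ × ℝ × ℝ => φ p.1 p.2.1 p.2.2) (a * s, b * s, c * s) (1, 0, 0) (1, 0, 0) = B11
  generalize hB12 : fderiv ℝ (fderiv ℝ fun p : ℝ × ℝ × ℝ => φ p.1 p.2.1 p.2.2) (a * s, b * s, c * s) (1, 0, 0) (0, 1, 0) = B12
  generalize hB13 : fderiv ℝ (fderiv ℝ fun p : ℝ × ℝ × ℝ => φ p.1 p.2.1 p.2.2) (a * s, b * s, c * s) (1, 0, 0) (0, 0, 1) = B13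
  generalize hB22 : fderiv ℝ (fderiv ℝ fun p : ℝ × ℝ × ℝ => φ p.1 p.2.1 p.2.2) (a * s, b * s, c * s) (0, 1, 0) (0, 1, 0) = B22
  generalize hB23 : fderiv ℝ (fderiv ℝ fun p : ℝ × ℝ × ℝ => φ p.1 p.2.1 p.2.2) (a * s, b * s, c * s) (0, 1, 0) (0, 0, 1) = B23
  generalize hB33 : fderiv ℝ (fderiv ℝ fun p : ℝ × ℝ × ℝ => φ p.1 p.2.1 p.2.2) (a * s, b * s, c * s) (0, 0, 1) (0, 0, 1) = B33
  generalize hT : fderiv ℝ (fun p : ℝ × ℝ × ℝ => φ p.1 p.2.1 p.2.2) (a * s, b * s, c * s) (1, 0, 0) = T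
  generalize hX : fderiv ℝ (fun p : ℝ × ℝ × ℝ => φ p.1 p.2.1 p.2.2) (a * s, b * s, c * s) (0, 1, 0) = X
  generalize hY : fderiv ℝ (fun p : ℝ × ℝ × ℝ => φ p.1 p.2.1 p.2.2) (a * s, b * s, c * s) (0, 0, 1) = Y
  generalize hA : φ (a * s) (b * s) (c * s) = A
  field_simp
  linear_combination ((2*a^2 - b^2 - c^2)*T + a*s*(a^2 + b^2 + c^2)*B11 + 2*a^2*b*s*B12 + 2*a^2*c*s*B13) * hrel
end

section
/- For ξ, η ∈ ℝ² set Φ₂±(ξ,η) = ⟨ξ⟩ - ⟨ξ-η⟩ ± |η|, where ⟨ζ⟩ = sqrt(1+|ζ|²). Then for η ≠ 0, |Φ₂±(ξ,η)| ≥ c |η| / (⟨η⟩ + ⟨ξ-η⟩)² for a universal constant c > 0. Moreover, Φ₁±(ξ,η) = ⟨ξ⟩ + ⟨ξ-η⟩ ± |η| satisfies |Φ₁±(ξ,η)| ≥ c (⟨ξ⟩^{-1} + ⟨ξ-η⟩^{-1}). -/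
/-- Japanese bracket `⟨ζ⟩ = sqrt(1+‖ζ‖²)` on ℝ². -/
noncomputable def jb (ζ : EuclideanSpace ℝ (Fin 2)) : ℝ := Real.sqrt (1 + ‖ζ‖ ^ 2)

/-!
`⟨x⟩ = √(1 + ‖x‖²)` is the norm of `(1, x)`, so `⟨x⟩ - ‖x‖ = 1 / (⟨x⟩ + ‖x‖) ≥ 1 / (2⟨x⟩)`;
with `‖x - y‖ ≤ ‖x‖ + ‖y‖` this bounds `Φ₁` from below.

For `Φ₂` the triangle inequality `|⟨x⟩ - ⟨y⟩| ≤ ‖x - y‖` has a quantitative gap. With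
`q = 1 + x·y` one has `‖x - y‖² - (⟨x⟩ - ⟨y⟩)² = 2 (⟨x⟩⟨y⟩ - q)`, while Lagrange's identity gives
`⟨x⟩²⟨y⟩² - q² ≥ ‖x - y‖²`; hence the gap is at least `‖x - y‖² / (⟨x⟩⟨y⟩)`. Dividing by
`‖x - y‖ + |⟨x⟩ - ⟨y⟩| ≤ 2‖x - y‖` gives `|‖x - y‖ ± (⟨x⟩ - ⟨y⟩)| ≥ ‖x - y‖ / (2⟨x⟩⟨y⟩)`.
-/

noncomputable def japaneseBracket {E : Type*} [Norm E] (x : E) : ℝ := √(1 + ‖x‖ ^ 2)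

-- The paper's `⟨x⟩`; single angle brackets are taken by anonymous constructors.
local notation "⟪" x "⟫" => japaneseBracket x

section

variable {E : Type*} [SeminormedAddCommGroup E]

lemma japaneseBracket_sq (x : E) : ⟪x⟫ ^ 2 = 1 + ‖x‖ ^ 2 :=
  Real.sq_sqrt (by positivity)

lemma one_le_japaneseBracket (x : E) : 1 ≤ ⟪x⟫ :=
  Real.one_le_sqrt.mpr (by nlinarith [sq_nonneg ‖x‖])

lemma japaneseBracket_pos (x : E) : 0 < ⟪x⟫ := one_pos.trans_le (one_le_japaneseBracket x)

lemma norm_le_japaneseBracket (x : E) : ‖x‖ ≤ ⟪x⟫ :=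
  Real.le_sqrt_of_sq_le (by linarith)

lemma inv_two_mul_japaneseBracket_le_sub_norm (x : E) : (2 * ⟪x⟫)⁻¹ ≤ ⟪x⟫ - ‖x‖ := by
  have hsq := japaneseBracket_sq x
  rw [inv_le_iff_one_le_mul₀ (by linarith [japaneseBracket_pos x])]
  nlinarith [sq_nonneg (⟪x⟫ - ‖x‖)]

lemma inv_add_inv_div_two_le_japaneseBracket_add_sub_norm (x y : E) :
    (⟪x⟫⁻¹ + ⟪y⟫⁻¹) / 2 ≤ ⟪x⟫ + ⟪y⟫ - ‖x - y‖ := by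
  have hx := inv_two_mul_japaneseBracket_le_sub_norm x
  have hy := inv_two_mul_japaneseBracket_le_sub_norm y
  rw [mul_inv] at hx hy
  linarith [norm_sub_le x y]

variable [InnerProductSpace ℝ E]

lemma sq_norm_sub_div_mul_le_sq_sub_sq_japaneseBracket_sub (x y : E) :
    ‖x - y‖ ^ 2 / (⟪x⟫ * ⟪y⟫) ≤ ‖x - y‖ ^ 2 - (⟪x⟫ - ⟪y⟫) ^ 2 := by
  have hx := japaneseBracket_sq x
  have hy := japaneseBracket_sq y
  have hab : 0 < ⟪x⟫ * ⟪y⟫ := mul_pos (japaneseBracket_pos x) (japaneseBracket_pos y)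
  have hxy := norm_sub_sq_real x y
  have hcs : inner ℝ x y ≤ ‖x‖ * ‖y‖ := real_inner_le_norm x y
  have hcs_sq : inner ℝ x y ^ 2 ≤ ‖x‖ ^ 2 * ‖y‖ ^ 2 := by
    rw [← mul_pow, sq_le_sq]
    exact (abs_real_inner_le_norm x y).trans (le_abs_self _)
  set q := 1 + inner ℝ x y
  have hq : q ≤ ⟪x⟫ * ⟪y⟫ := by
    have : (1 + ‖x‖ * ‖y‖) ^ 2 ≤ (⟪x⟫ * ⟪y⟫) ^ 2 := by
      rw [mul_pow, hx, hy]; nlinarith [sq_nonneg (‖x‖ - ‖y‖)]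
    linarith [(abs_le_of_sq_le_sq this hab.le).trans' (le_abs_self _)]
  have hlagrange : ‖x - y‖ ^ 2 ≤ (⟪x⟫ * ⟪y⟫ - q) * (⟪x⟫ * ⟪y⟫ + q) := by
    have : (⟪x⟫ * ⟪y⟫ - q) * (⟪x⟫ * ⟪y⟫ + q) = (1 + ‖x‖ ^ 2) * (1 + ‖y‖ ^ 2) - q ^ 2 := by
      rw [← hx, ← hy]; ring
    rw [this, hxy]; nlinarith
  have hgap : ‖x - y‖ ^ 2 - (⟪x⟫ - ⟪y⟫) ^ 2 = 2 * (⟪x⟫ * ⟪y⟫ - q) := by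
    linear_combination hxy - hx - hy
  rw [hgap, div_le_iff₀ hab]
  nlinarith

lemma abs_japaneseBracket_sub_le_norm_sub (x y : E) : |⟪x⟫ - ⟪y⟫| ≤ ‖x - y‖ := by
  refine abs_le_of_sq_le_sq ?_ (norm_nonneg _)
  have := sq_norm_sub_div_mul_le_sq_sub_sq_japaneseBracket_sub x y
  have : 0 ≤ ‖x - y‖ ^ 2 / (⟪x⟫ * ⟪y⟫) :=
    div_nonneg (sq_nonneg _) (mul_pos (japaneseBracket_pos x) (japaneseBracket_pos y)).le
  linarith

lemma norm_sub_div_le_norm_sub_sub_japaneseBracket_sub (x y : E) :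
    ‖x - y‖ / (2 * (⟪x⟫ * ⟪y⟫)) ≤ ‖x - y‖ - (⟪x⟫ - ⟪y⟫) := by
  have hgap := sq_norm_sub_div_mul_le_sq_sub_sq_japaneseBracket_sub x y
  have hlip := abs_le.mp (abs_japaneseBracket_sub_le_norm_sub x y)
  have hab : 0 < ⟪x⟫ * ⟪y⟫ := mul_pos (japaneseBracket_pos x) (japaneseBracket_pos y)
  rw [div_le_iff₀ hab] at hgap
  rw [div_le_iff₀ (by positivity)]
  rcases (norm_nonneg (x - y)).eq_or_lt with h0 | hpos
  · have hd : ⟪x⟫ - ⟪y⟫ = 0 := by rw [← h0] at hlip; linarith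
    rw [← h0, hd]; norm_num
  · nlinarith [mul_le_mul_of_nonneg_left (show ‖x - y‖ + (⟪x⟫ - ⟪y⟫) ≤ 2 * ‖x - y‖ by linarith)
      (show 0 ≤ ‖x - y‖ - (⟪x⟫ - ⟪y⟫) by linarith)]

lemma japaneseBracket_mul_le_sq_add (x y : E) : ⟪x⟫ * ⟪y⟫ ≤ (⟪x - y⟫ + ⟪y⟫) ^ 2 := by
  have hx : ⟪x⟫ ≤ ⟪x - y⟫ + ⟪y⟫ := by
    linarith [(abs_le.mp (abs_japaneseBracket_sub_le_norm_sub x y)).2,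
      norm_le_japaneseBracket (x - y)]
  nlinarith [japaneseBracket_pos x, japaneseBracket_pos y, (japaneseBracket_pos (x - y)).le]

end

/-- Lower bounds on the phase functions `Φ₁± = ⟨ξ⟩ + ⟨ξ-η⟩ ± |η|` and
`Φ₂± = ⟨ξ⟩ - ⟨ξ-η⟩ ± |η|`: there is a universal constant `c > 0` with
`|Φ₂±| ≥ c|η|/(⟨η⟩+⟨ξ-η⟩)²` for `η ≠ 0` and `|Φ₁±| ≥ c(⟨ξ⟩⁻¹ + ⟨ξ-η⟩⁻¹)`. -/
theorem stmt19 :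
    ∃ c : ℝ, 0 < c ∧
      ∀ ξ η : EuclideanSpace ℝ (Fin 2),
        ((η ≠ 0 →
          c * ‖η‖ / (jb η + jb (ξ - η)) ^ 2 ≤ |jb ξ - jb (ξ - η) + ‖η‖| ∧
          c * ‖η‖ / (jb η + jb (ξ - η)) ^ 2 ≤ |jb ξ - jb (ξ - η) - ‖η‖|) ∧
        (c * ((jb ξ)⁻¹ + (jb (ξ - η))⁻¹) ≤ |jb ξ + jb (ξ - η) + ‖η‖| ∧
          c * ((jb ξ)⁻¹ + (jb (ξ - η))⁻¹) ≤ |jb ξ + jb (ξ - η) - ‖η‖|)) := by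
  have hjb : ∀ ζ, jb ζ = japaneseBracket ζ := fun _ => rfl
  refine ⟨1 / 2, one_half_pos, fun ξ η => ⟨fun _ => ?_, ?_⟩⟩ <;> simp only [hjb]
  · have hminus := norm_sub_div_le_norm_sub_sub_japaneseBracket_sub ξ (ξ - η)
    have hplus := norm_sub_div_le_norm_sub_sub_japaneseBracket_sub (ξ - η) ξ
    have hmul := japaneseBracket_mul_le_sq_add ξ (ξ - η)
    rw [sub_sub_cancel] at hminus hmul
    rw [sub_sub_cancel_left, norm_neg, mul_comm ⟪ξ - η⟫] at hplus
    have hbound : 1 / 2 * ‖η‖ / (⟪η⟫ + ⟪ξ - η⟫) ^ 2 ≤ ‖η‖ / (2 * (⟪ξ⟫ * ⟪ξ - η⟫)) := by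
      rw [one_div_mul_eq_div, div_div]
      have := mul_pos (japaneseBracket_pos ξ) (japaneseBracket_pos (ξ - η))
      exact div_le_div_of_nonneg_left (norm_nonneg _) (by positivity) (by linarith)
    exact ⟨hbound.trans (hplus.trans_eq (by ring) |>.trans (le_abs_self _)),
      hbound.trans (hminus.trans (le_abs_self _) |>.trans_eq (abs_sub_comm _ _))⟩
  · have h := inv_add_inv_div_two_le_japaneseBracket_add_sub_norm ξ (ξ - η)
    rw [sub_sub_cancel] at h
    have := le_abs_self (⟪ξ⟫ + ⟪ξ - η⟫ + ‖η‖)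
    have := le_abs_self (⟪ξ⟫ + ⟪ξ - η⟫ - ‖η‖)
    constructor <;> linarith [norm_nonneg η]
end
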